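/- arXiv:2209.06241 — 6 statements merged into one kernel-verified Lean document; each statement's English description precedes it below -/
import Mathlib

section
/- Let S ⊆ ℝⁿ be a bounded set such that 0 lies in the relative interior of the convex hull of S, and let f_S(x) = sup_{v∈S} ⟨x, v⟩ be the support function of S (under these hypotheses f_S ∈ CH⁺₁(ℝⁿ)). Then for every x ∈ ℝⁿ, 𝒟f_S(x) = inf{ α₁ + ⋯ + α_N : N ∈ ℕ, α₁, …, α_N ≥ 0, v₁, …, v_N ∈ S, and f_S(α₁v₁ + ⋯ + α_N v_N − x) = 0 }. -/
open Set
open scoped RealInnerProductSpace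

noncomputable section

abbrev Euc (n : ℕ) := EuclideanSpace ℝ (Fin n)

/-- `CHplus n p f` : `f` is convex, nonnegative, positively `p`-homogeneous and
its kernel is a linear subspace of `ℝⁿ`. -/
def CHplus (n : ℕ) (p : ℝ) (f : Euc n → ℝ) : Prop :=
  ConvexOn ℝ Set.univ f ∧ (∀ x, 0 ≤ f x) ∧
    (∀ t : ℝ, 0 < t → ∀ x, f (t • x) = t ^ p * f x) ∧
    ∃ K : Submodule ℝ (Euc n), (K : Set (Euc n)) = {x | f x = 0}

/-- The norm-like dual `𝒟f`. -/
def NormDual {n : ℕ} (f : Euc n → ℝ) : Euc n → ℝ := fun x =>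
  sSup {r : ℝ | ∃ y : Euc n, f y ≤ 1 ∧ (∀ z, f z = 0 → ⟪y, z⟫ = 0) ∧ r = ⟪y, x⟫}

/-- Subdifferential of a convex function. -/
def subdiff {n : ℕ} (f : Euc n → ℝ) (x : Euc n) : Set (Euc n) :=
  {v | ∀ y, ⟪v, y - x⟫ ≤ f y - f x}

/-- `(lam, x)` is an eigenpair of `(f, g)`, i.e. `0 ∈ ∂f(x) - lam ∂g(x)`. -/
def IsEigenpair {n : ℕ} (f g : Euc n → ℝ) (lam : ℝ) (x : Euc n) : Prop :=
  ∃ w ∈ subdiff g x, lam • w ∈ subdiff f x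

/-- `lam` is an eigenvalue of the pair `(f, g)`. -/
def IsEigenvalue {n : ℕ} (f g : Euc n → ℝ) (lam : ℝ) : Prop :=
  ∃ x : Euc n, x ≠ 0 ∧ IsEigenpair f g lam x

/-- The eigenspace `S_lam(f,g)`. -/
def eigSpace {n : ℕ} (f g : Euc n → ℝ) (lam : ℝ) : Set (Euc n) :=
  {x | IsEigenpair f g lam x}

/-- Krasnoselskii genus. -/
def genus {n : ℕ} (S : Set (Euc n)) : ℕ∞ :=
  sInf {k : ℕ∞ | ∃ m : ℕ, k = (m : ℕ∞) ∧
    ∃ φ : Euc n → Euc m, ContinuousOn φ S ∧ (∀ x ∈ S, φ x ≠ 0) ∧ ∀ x ∈ S, φ (-x) = -φ x}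

/-- Multiplicity of an eigenvalue. -/
def mult {n : ℕ} (f g : Euc n → ℝ) (lam : ℝ) : ℕ∞ := genus (eigSpace f g lam)

/-- `k`-th variational eigenvalue of the pair `(f,g)`. -/
def varEig {n : ℕ} (f g : Euc n → ℝ) (k : ℕ) : ℝ :=
  sInf {r : ℝ | ∃ S : Set (Euc n), (0 : Euc n) ∉ S ∧ IsClosed S ∧ (∀ x ∈ S, -x ∈ S) ∧
    (k : ℕ∞) ≤ genus S ∧ r = sSup ((fun x => f x / g x) '' S)}

/-- `cone(S)`. -/
def coneSet {n : ℕ} (S : Set (Euc n)) : Set (Euc n) :=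
  {u | ∃ t : ℝ, 0 < t ∧ ∃ v ∈ S, u = t • v}

/-- `ℳ_A f (x) = f (Aᵀ x)`. -/
def Mop {n m : ℕ} (A : Euc n →L[ℝ] Euc m) (f : Euc n → ℝ) : Euc m → ℝ :=
  fun x => f (ContinuousLinearMap.adjoint A x)

/-- `𝒫_A f (x) = inf { f y : A y = P_A x }` with `P_A` the orthogonal projection
onto the range of `A`. -/
def Pop {n m : ℕ} (A : Euc n →L[ℝ] Euc m) (f : Euc n → ℝ) : Euc m → ℝ :=
  fun x => sInf {r : ℝ | ∃ y : Euc n,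
    A y = (Submodule.orthogonalProjectionOnto (LinearMap.range (A : Euc n →ₗ[ℝ] Euc m)) x : Euc m) ∧ r = f y}

/-- Modified Legendre transform. -/
def Leg {n : ℕ} (f : Euc n → ℝ) : Euc n → ℝ := fun x =>
  sSup {r : ℝ | ∃ y : Euc n, (∀ z, f z = 0 → ⟪y, z⟫ = 0) ∧ r = ⟪x, y⟫ - f y}

/-- Modified polarity transform. -/
def Pol {n : ℕ} (f : Euc n → ℝ) : Euc n → ℝ := fun x =>
  sSup {r : ℝ | ∃ y : Euc n, (∀ z, f z = 0 → ⟪y, z⟫ = 0) ∧ 0 < f y ∧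
    r = (⟪x, y⟫ - 1) / f y}

/-!
Let `V` be the span of `S` and `K` its convex hull. As `0` lies in the relative interior of `K`,
`K` contains a ball of `V`; hence `f_S` is coercive on `V` and vanishes exactly on `Vᗮ`, so
`𝒟f_S x` is the supremum of `⟪y, x⟫` over `y ∈ V` with `f_S y ≤ 1`. The infimum on the right is
the gauge of `K` at the orthogonal projection `z` of `x` onto `V`. The two agree by polar duality:
if `c` is below the gauge, then `c⁻¹ • z` lies outside the closure of `K` (points of the closure
shrunk towards `0` fall back into `K`), and a functional separating it from that closure gives an
admissible `y` with `⟪y, x⟫ > c`.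
-/

open Bornology Metric Submodule
open scoped Pointwise

lemma sInf_setOf_nonneg_mem_smul_eq_gauge {E : Type*} [AddCommGroup E] [Module ℝ E]
    {s : Set E} (hs : s.Nonempty) (z : E) :
    sInf {r : ℝ | 0 ≤ r ∧ z ∈ r • s} = gauge s z := by
  rcases eq_or_ne z 0 with rfl | hz
  · rw [gauge_zero]
    exact IsLeast.csInf_eq ⟨⟨le_rfl, by rw [zero_smul_set hs]; rfl⟩, fun r hr => hr.1⟩
  · rw [gauge_def]
    congr 1
    ext r
    refine ⟨fun ⟨hr, hzr⟩ => ⟨hr.lt_of_ne ?_, hzr⟩, fun ⟨hr, hzr⟩ => ⟨le_of_lt hr, hzr⟩⟩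
    rintro rfl
    rw [zero_smul_set hs] at hzr
    exact hz hzr

lemma exists_fin_nonneg_sum_smul_eq_iff {E : Type*} [AddCommGroup E] [Module ℝ E]
    {S : Set E} (hS : S.Nonempty) {w : E} {r : ℝ} :
    (∃ (N : ℕ) (α : Fin N → ℝ) (v : Fin N → E), (∀ i, 0 ≤ α i) ∧ (∀ i, v i ∈ S) ∧
      ∑ i, α i • v i = w ∧ ∑ i, α i = r) ↔ 0 ≤ r ∧ w ∈ r • convexHull ℝ S := by
  have hK : (convexHull ℝ S).Nonempty := convexHull_nonempty_iff.mpr hS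
  constructor
  · rintro ⟨N, α, v, hα, hv, rfl, rfl⟩
    have hsum : 0 ≤ ∑ i, α i := Finset.sum_nonneg fun i _ => hα i
    refine ⟨hsum, ?_⟩
    rcases hsum.eq_or_lt with hsum | hsum
    · have hα0 : ∀ i, α i = 0 := fun i =>
        (Finset.sum_eq_zero_iff_of_nonneg fun i _ => hα i).mp hsum.symm i (Finset.mem_univ i)
      simp [hα0, zero_smul_set hK]
    · rw [mem_smul_set_iff_inv_smul_mem₀ hsum.ne']
      exact Finset.centerMass_mem_convexHull _ (fun i _ => hα i) hsum fun i _ => hv i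
  · rintro ⟨hr, hw⟩
    rcases hr.eq_or_lt with rfl | hr
    · rw [zero_smul_set hK, Set.mem_zero] at hw
      exact ⟨0, fun i => i.elim0, fun i => i.elim0, fun i => i.elim0, fun i => i.elim0,
        by simp [hw], by simp⟩
    · obtain ⟨k, hk, rfl⟩ := hw
      obtain ⟨ι, _, β, z, hβ, hβ1, hz, rfl⟩ := mem_convexHull_iff_exists_fintype.mp hk
      let e := (Fintype.equivFin ι).symm
      refine ⟨Fintype.card ι, fun i => r * β (e i), fun i => z (e i),
        fun i => mul_nonneg hr.le (hβ _), fun i => hz _, ?_, ?_⟩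
      · rw [e.sum_comp (fun j => (r * β j) • z j)]
        simp_rw [mul_smul, ← Finset.smul_sum]
      · rw [e.sum_comp (fun j => r * β j), ← Finset.mul_sum, hβ1, mul_one]

section InnerProductSpace

variable {E : Type*} [NormedAddCommGroup E] [InnerProductSpace ℝ E]

def supportFun (S : Set E) (x : E) : ℝ := sSup {r : ℝ | ∃ v ∈ S, r = ⟪x, v⟫}

variable {S : Set E}

lemma bddAbove_setOf_inner (hS : IsBounded S) (x : E) :
    BddAbove {r : ℝ | ∃ v ∈ S, r = ⟪x, v⟫} := by
  obtain ⟨C, hC⟩ := isBounded_iff_forall_norm_le.mp hS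
  refine ⟨‖x‖ * C, ?_⟩
  rintro _ ⟨v, hv, rfl⟩
  exact (real_inner_le_norm x v).trans (mul_le_mul_of_nonneg_left (hC v hv) (norm_nonneg x))

lemma inner_le_supportFun (hS : IsBounded S) {v : E} (hv : v ∈ S) (x : E) :
    ⟪x, v⟫ ≤ supportFun S x :=
  le_csSup (bddAbove_setOf_inner hS x) ⟨v, hv, rfl⟩

lemma supportFun_le (hS : S.Nonempty) {x : E} {b : ℝ} (h : ∀ v ∈ S, ⟪x, v⟫ ≤ b) :
    supportFun S x ≤ b := by
  obtain ⟨v₀, hv₀⟩ := hS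
  exact csSup_le ⟨_, v₀, hv₀, rfl⟩ (by rintro _ ⟨v, hv, rfl⟩; exact h v hv)

lemma inner_le_supportFun_of_mem_convexHull (hS : IsBounded S) {w : E}
    (hw : w ∈ convexHull ℝ S) (x : E) : ⟪x, w⟫ ≤ supportFun S x :=
  convexHull_min (fun _ hv => inner_le_supportFun hS hv x)
    (convex_halfSpace_le (innerₛₗ ℝ x).isLinear _) hw

lemma supportFun_nonneg (hS : IsBounded S) (h0 : (0 : E) ∈ convexHull ℝ S) (x : E) :
    0 ≤ supportFun S x := by
  simpa using inner_le_supportFun_of_mem_convexHull hS h0 x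

lemma supportFun_smul {t : ℝ} (ht : 0 ≤ t) (x : E) :
    supportFun S (t • x) = t * supportFun S x := by
  have : {r : ℝ | ∃ v ∈ S, r = ⟪t • x, v⟫} = t • {r : ℝ | ∃ v ∈ S, r = ⟪x, v⟫} := by
    ext r
    simp [Set.mem_smul_set, real_inner_smul_left, eq_comm]
  rw [supportFun, this, Real.sSup_smul_of_nonneg ht, smul_eq_mul, supportFun]

lemma convexOn_supportFun (hS : IsBounded S) (hne : S.Nonempty) :
    ConvexOn ℝ univ (supportFun S) :=
  ⟨convex_univ, fun x _ y _ a b ha hb _ => supportFun_le hne fun v hv => by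
    rw [inner_add_left, real_inner_smul_left, real_inner_smul_left]
    exact add_le_add (mul_le_mul_of_nonneg_left (inner_le_supportFun hS hv x) ha)
      (mul_le_mul_of_nonneg_left (inner_le_supportFun hS hv y) hb)⟩

lemma supportFun_starProjection {K : Submodule ℝ E} [K.HasOrthogonalProjection]
    (hSK : S ⊆ K) (x : E) : supportFun S (K.starProjection x) = supportFun S x := by
  unfold supportFun
  congr 1
  ext r
  refine exists_congr fun v => and_congr_right fun hv => ?_
  rw [inner_starProjection_left_eq_right, starProjection_eq_self_iff.mpr (hSK hv)]

lemma span_convexHull_eq_span : span ℝ (convexHull ℝ S) = span ℝ S :=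
  le_antisymm (span_le.mpr (convexHull_min subset_span (span ℝ S).convex))
    (span_mono (subset_convexHull ℝ S))

lemma exists_ball_inter_span_subset_of_zero_mem_intrinsicInterior {s : Set E}
    (h0 : (0 : E) ∈ intrinsicInterior ℝ s) : ∃ ε > 0, ball 0 ε ∩ span ℝ s ⊆ s := by
  have h0s : (0 : E) ∈ s := intrinsicInterior_subset h0
  obtain ⟨y, hy, hy0⟩ := mem_intrinsicInterior.mp h0
  obtain ⟨ε, hε, hball⟩ := Metric.mem_nhds_iff.mp (mem_interior_iff_mem_nhds.mp hy)
  refine ⟨ε, hε, fun w ⟨hwε, hw⟩ => ?_⟩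
  have hw' : w ∈ affineSpan ℝ s := by
    have : w ∈ (affineSpan ℝ s).direction := by
      simpa [direction_affineSpan, vectorSpan_eq_span_vsub_set_right ℝ h0s] using hw
    simpa using AffineSubspace.vadd_mem_of_mem_direction this (subset_affineSpan ℝ s h0s)
  have hwy : (⟨w, hw'⟩ : affineSpan ℝ s) ∈ ball y ε := by
    rwa [Metric.mem_ball, Subtype.dist_eq, hy0, ← mem_ball]
  exact hball hwy

lemma exists_pos_mem_smul_of_mem_span {s : Set E} (h0 : (0 : E) ∈ intrinsicInterior ℝ s)
    {z : E} (hz : z ∈ span ℝ s) : ∃ r : ℝ, 0 < r ∧ z ∈ r • s := by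
  obtain ⟨ε, hε, hball⟩ := exists_ball_inter_span_subset_of_zero_mem_intrinsicInterior h0
  have hr : 0 < (‖z‖ + 1) / ε := by positivity
  refine ⟨_, hr, (mem_smul_set_iff_inv_smul_mem₀ hr.ne' _ _).mpr (hball ⟨?_, smul_mem _ _ hz⟩)⟩
  rw [mem_ball_zero_iff, norm_smul, Real.norm_of_nonneg (by positivity), inv_div,
    div_mul_eq_mul_div, div_lt_iff₀ (by positivity)]
  nlinarith

lemma exists_pos_mul_norm_le_supportFun (hS : IsBounded S)
    (h0 : (0 : E) ∈ intrinsicInterior ℝ (convexHull ℝ S)) :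
    ∃ ε > 0, ∀ y ∈ span ℝ S, ε * ‖y‖ ≤ supportFun S y := by
  obtain ⟨ε, hε, hball⟩ := exists_ball_inter_span_subset_of_zero_mem_intrinsicInterior h0
  rw [span_convexHull_eq_span] at hball
  refine ⟨ε / 2, by positivity, fun y hy => ?_⟩
  rcases eq_or_ne y 0 with rfl | hy0
  · simpa using supportFun_nonneg hS (intrinsicInterior_subset h0) 0
  have hny : 0 < ‖y‖ := norm_pos_iff.mpr hy0
  have hmem : (ε / 2 / ‖y‖) • y ∈ convexHull ℝ S := by
    refine hball ⟨?_, smul_mem _ _ hy⟩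
    rw [mem_ball_zero_iff, norm_smul, Real.norm_of_nonneg (by positivity),
      div_mul_cancel₀ _ hny.ne']
    linarith
  have key := inner_le_supportFun_of_mem_convexHull hS hmem y
  rw [real_inner_smul_right, real_inner_self_eq_norm_sq] at key
  calc ε / 2 * ‖y‖ = ε / 2 / ‖y‖ * ‖y‖ ^ 2 := by field_simp
    _ ≤ supportFun S y := key

lemma inner_le_gauge_convexHull (hS : IsBounded S) {y z : E} (hy : supportFun S y ≤ 1)
    (hz : ∃ r : ℝ, 0 < r ∧ z ∈ r • convexHull ℝ S) : ⟪y, z⟫ ≤ gauge (convexHull ℝ S) z := by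
  obtain ⟨r₀, hr₀, hz₀⟩ := hz
  refine le_csInf ⟨r₀, hr₀, hz₀⟩ ?_
  rintro r ⟨hr, w, hw, rfl⟩
  rw [real_inner_smul_right]
  calc r * ⟪y, w⟫ ≤ r * 1 :=
        mul_le_mul_of_nonneg_left ((inner_le_supportFun_of_mem_convexHull hS hw y).trans hy)
          (le_of_lt hr)
    _ = r := mul_one r

variable [FiniteDimensional ℝ E]

lemma Convex.smul_mem_of_mem_closure {s : Set E} (hs : Convex ℝ s)
    (h0 : (0 : E) ∈ intrinsicInterior ℝ s) {w : E} (hw : w ∈ closure s) {t : ℝ}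
    (ht0 : 0 ≤ t) (ht1 : t < 1) : t • w ∈ s := by
  obtain ⟨ε, hε, hball⟩ := exists_ball_inter_span_subset_of_zero_mem_intrinsicInterior h0
  have hsV : s ⊆ span ℝ s := subset_span
  have hwV : w ∈ span ℝ s :=
    closure_minimal hsV (span ℝ s).closed_of_finiteDimensional hw
  have h1t : 0 < 1 - t := by linarith
  obtain ⟨v, hv, hwv⟩ := Metric.mem_closure_iff.mp hw ((1 - t) * ε / (t + 1)) (by positivity)
  -- `t • w` is a convex combination of `v ∈ s` and a short vector `u` of the span.
  set u : E := (t / (1 - t)) • (w - v)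
  have hu : u ∈ s := by
    refine hball ⟨?_, smul_mem _ _ (sub_mem hwV (hsV hv))⟩
    rw [mem_ball_zero_iff, norm_smul, Real.norm_of_nonneg (by positivity), ← dist_eq_norm]
    calc t / (1 - t) * dist w v ≤ t / (1 - t) * ((1 - t) * ε / (t + 1)) := by gcongr
      _ = t / (t + 1) * ε := by field_simp
      _ < 1 * ε := by gcongr; rw [div_lt_one (by linarith)]; linarith
      _ = ε := one_mul ε
  have hcomb : t • v + (1 - t) • u = t • w := by
    simp only [u, smul_smul, smul_sub]
    rw [mul_div_cancel₀ _ h1t.ne']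
    abel
  exact hcomb ▸ hs hv hu ht0 h1t.le (by ring)

lemma supportFun_eq_zero_iff (hS : IsBounded S)
    (h0 : (0 : E) ∈ intrinsicInterior ℝ (convexHull ℝ S)) {x : E} :
    supportFun S x = 0 ↔ x ∈ (span ℝ S)ᗮ := by
  constructor
  · intro hx
    obtain ⟨ε, hε, hcoer⟩ := exists_pos_mul_norm_le_supportFun hS h0
    have hPx := hcoer _ (starProjection_apply_mem (span ℝ S) x)
    rw [supportFun_starProjection subset_span, hx] at hPx
    have : (span ℝ S).starProjection x = 0 :=
      norm_eq_zero.mp (le_antisymm (nonpos_of_mul_nonpos_right hPx hε) (norm_nonneg _))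
    exact (starProjection_apply_eq_zero_iff _).mp this
  · intro hx
    have hne : S.Nonempty := convexHull_nonempty_iff.mp ⟨0, intrinsicInterior_subset h0⟩
    refine le_antisymm (supportFun_le hne fun v hv => ?_)
      (supportFun_nonneg hS (intrinsicInterior_subset h0) x)
    rw [real_inner_comm, (mem_orthogonal _ x).mp hx v (subset_span hv)]

lemma gauge_convexHull_le (h0 : (0 : E) ∈ intrinsicInterior ℝ (convexHull ℝ S)) {z : E} {c : ℝ}
    (hc : 0 < c) (hcz : ∀ y, supportFun S y ≤ 1 → ⟪y, z⟫ ≤ c) :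
    gauge (convexHull ℝ S) z ≤ c := by
  by_contra! hlt
  obtain ⟨c', hcc', hc'⟩ := exists_between hlt
  have hc'pos : 0 < c' := hc.trans hcc'
  have hnotin : c⁻¹ • z ∉ closure (convexHull ℝ S) := by
    intro hmem
    have := (convex_convexHull ℝ S).smul_mem_of_mem_closure h0 hmem (by positivity)
      ((div_lt_one hc'pos).mpr hcc')
    rw [smul_smul, show c / c' * c⁻¹ = c'⁻¹ by field_simp,
      ← mem_smul_set_iff_inv_smul_mem₀ hc'pos.ne'] at this
    exact (gauge_le_of_mem hc'pos.le this).not_gt hc'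
  obtain ⟨ℓ, u, hℓu, huz⟩ := geometric_hahn_banach_closed_point
    (convex_convexHull ℝ S).closure isClosed_closure hnotin
  have hu : 0 < u := by
    simpa using hℓu 0 (subset_closure (intrinsicInterior_subset h0))
  set y := (InnerProductSpace.toDual ℝ E).symm ℓ
  have hy : ∀ w, ⟪y, w⟫ = ℓ w := fun w => InnerProductSpace.toDual_symm_apply
  have hfy : supportFun S (u⁻¹ • y) ≤ 1 := by
    rw [supportFun_smul (by positivity)]
    refine (inv_mul_le_one₀ hu).mpr (supportFun_le ?_ fun v hv => ?_)
    · exact convexHull_nonempty_iff.mp ⟨0, intrinsicInterior_subset h0⟩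
    · exact (hy v).trans_le (hℓu v (subset_closure (subset_convexHull ℝ S hv))).le
  have hle := hcz _ hfy
  rw [real_inner_smul_left, hy, inv_mul_le_iff₀ hu] at hle
  rw [map_smul, smul_eq_mul, lt_inv_mul_iff₀ hc] at huz
  linarith

lemma sSup_inner_eq_gauge_convexHull (hS : IsBounded S)
    (h0 : (0 : E) ∈ intrinsicInterior ℝ (convexHull ℝ S)) {z : E} (hz : z ∈ span ℝ S) :
    sSup {r : ℝ | ∃ y ∈ span ℝ S, supportFun S y ≤ 1 ∧ r = ⟪y, z⟫} =
      gauge (convexHull ℝ S) z := by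
  set A := {r : ℝ | ∃ y ∈ span ℝ S, supportFun S y ≤ 1 ∧ r = ⟪y, z⟫}
  have hf0 : supportFun S 0 = 0 := by simpa using supportFun_smul (S := S) le_rfl (0 : E)
  have h0A : (0 : ℝ) ∈ A := ⟨0, zero_mem _, hf0.trans_le zero_le_one, by simp⟩
  have hbdd : BddAbove A := by
    obtain ⟨ε, hε, hcoer⟩ := exists_pos_mul_norm_le_supportFun hS h0
    refine ⟨1 / ε * ‖z‖, ?_⟩
    rintro _ ⟨y, hyV, hy, rfl⟩
    calc ⟪y, z⟫ ≤ ‖y‖ * ‖z‖ := real_inner_le_norm y z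
      _ ≤ 1 / ε * ‖z‖ := by
        gcongr
        exact (le_div_iff₀' hε).mpr ((hcoer y hyV).trans hy)
  refine le_antisymm (csSup_le ⟨0, h0A⟩ ?_) (le_of_forall_gt_imp_ge_of_dense fun c hc => ?_)
  · rintro _ ⟨y, -, hy, rfl⟩
    refine inner_le_gauge_convexHull hS hy (exists_pos_mem_smul_of_mem_span h0 ?_)
    rwa [span_convexHull_eq_span]
  · refine gauge_convexHull_le h0 ((le_csSup hbdd h0A).trans_lt hc) fun y hy => ?_
    -- only the component of `y` in the span of `S` is seen by `z` and by `supportFun S`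
    have hyz : ⟪y, z⟫ ∈ A :=
      ⟨_, starProjection_apply_mem _ y, by rwa [supportFun_starProjection subset_span],
        by rw [inner_starProjection_left_eq_right, starProjection_eq_self_iff.mpr hz]⟩
    exact (le_csSup hbdd hyz).trans hc.le

lemma setOf_supportFun_sum_sub_eq_zero (hS : IsBounded S)
    (h0 : (0 : E) ∈ intrinsicInterior ℝ (convexHull ℝ S)) (x : E) :
    {r : ℝ | ∃ (N : ℕ) (α : Fin N → ℝ) (v : Fin N → E), (∀ i, 0 ≤ α i) ∧ (∀ i, v i ∈ S) ∧
        supportFun S ((∑ i, α i • v i) - x) = 0 ∧ r = ∑ i, α i} =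
      {r : ℝ | 0 ≤ r ∧ (span ℝ S).starProjection x ∈ r • convexHull ℝ S} := by
  have hne : S.Nonempty := convexHull_nonempty_iff.mp ⟨0, intrinsicInterior_subset h0⟩
  ext r
  constructor
  · rintro ⟨N, α, v, hα, hv, hf, rfl⟩
    obtain ⟨hr, ⟨k, hk, hw⟩⟩ :=
      (exists_fin_nonneg_sum_smul_eq_iff hne).mp ⟨N, α, v, hα, hv, rfl, rfl⟩
    have hwV : ∑ i, α i • v i ∈ span ℝ S :=
      hw ▸ smul_mem _ _ (convexHull_min subset_span (span ℝ S).convex hk)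
    have hxw : x - ∑ i, α i • v i ∈ (span ℝ S)ᗮ := by
      simpa using neg_mem ((supportFun_eq_zero_iff hS h0).mp hf)
    rw [eq_starProjection_of_mem_orthogonal hwV hxw]
    exact ⟨hr, k, hk, hw⟩
  · rintro ⟨hr, hPx⟩
    obtain ⟨N, α, v, hα, hv, hsum, rfl⟩ := (exists_fin_nonneg_sum_smul_eq_iff hne).mpr ⟨hr, hPx⟩
    refine ⟨N, α, v, hα, hv, ?_, rfl⟩
    rw [hsum, supportFun_eq_zero_iff hS h0]
    simpa using neg_mem (sub_starProjection_mem_orthogonal (K := span ℝ S) x)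

end InnerProductSpace

lemma CHplus_supportFun {n : ℕ} {S : Set (Euc n)} (hS : IsBounded S)
    (h0 : (0 : Euc n) ∈ intrinsicInterior ℝ (convexHull ℝ S)) : CHplus n 1 (supportFun S) :=
  ⟨convexOn_supportFun hS (convexHull_nonempty_iff.mp ⟨0, intrinsicInterior_subset h0⟩),
    supportFun_nonneg hS (intrinsicInterior_subset h0),
    fun t ht x => by rw [Real.rpow_one, supportFun_smul ht.le],
    ⟨(span ℝ S)ᗮ, by ext x; exact (supportFun_eq_zero_iff hS h0).symm⟩⟩

lemma normDual_supportFun {n : ℕ} {S : Set (Euc n)} (hS : IsBounded S)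
    (h0 : (0 : Euc n) ∈ intrinsicInterior ℝ (convexHull ℝ S)) (x : Euc n) :
    NormDual (supportFun S) x = gauge (convexHull ℝ S) ((span ℝ S).starProjection x) := by
  have hker : ∀ y, (∀ z, supportFun S z = 0 → ⟪y, z⟫ = 0) ↔ y ∈ span ℝ S := fun y => by
    simp_rw [supportFun_eq_zero_iff hS h0]
    conv_rhs => rw [← (span ℝ S).orthogonal_orthogonal, mem_orthogonal']
  rw [← sSup_inner_eq_gauge_convexHull hS h0 (starProjection_apply_mem _ x)]
  unfold NormDual
  congr 1
  ext r
  have hPx : ∀ y ∈ span ℝ S, ⟪y, (span ℝ S).starProjection x⟫ = ⟪y, x⟫ := fun y hy => by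
    rw [← inner_starProjection_left_eq_right, starProjection_eq_self_iff.mpr hy]
  simp only [mem_ofPred_eq, hker]
  exact ⟨fun ⟨y, h1, hy, hr⟩ => ⟨y, hy, h1, hr.trans (hPx y hy).symm⟩,
    fun ⟨y, hy, h1, hr⟩ => ⟨y, h1, hy, hr.trans (hPx y hy)⟩⟩

/-- the norm-like dual of a support function. -/
theorem stmt_2 {n : ℕ} (S : Set (Euc n)) (hSb : Bornology.IsBounded S)
    (fS : Euc n → ℝ)
    (hfS : ∀ x, fS x = sSup {r : ℝ | ∃ v ∈ S, r = ⟪x, v⟫})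
    (h0 : (0 : Euc n) ∈ intrinsicInterior ℝ (convexHull ℝ S)) :
    CHplus n 1 fS ∧
    ∀ x, NormDual fS x =
      sInf {r : ℝ | ∃ (N : ℕ) (α : Fin N → ℝ) (v : Fin N → Euc n),
        (∀ i, 0 ≤ α i) ∧ (∀ i, v i ∈ S) ∧
        fS ((∑ i, α i • v i) - x) = 0 ∧ r = ∑ i, α i} := by
  obtain rfl : fS = supportFun S := funext hfS
  refine ⟨CHplus_supportFun hSb h0, fun x => ?_⟩
  rw [normDual_supportFun hSb h0, setOf_supportFun_sum_sub_eq_zero hSb h0,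
    sInf_setOf_nonneg_mem_smul_eq_gauge ⟨0, intrinsicInterior_subset h0⟩]

end
end

section
/- Let f ∈ CH⁺₁(ℝⁿ) and let A : ℝⁿ → ℝᵐ be a linear map with Ker(f) ⊆ Ker(A). Then 𝒫_A f = 𝒟(ℳ_A(𝒟f)). In particular, if f(x) > 0 for every x ≠ 0, then 𝒫_A f = 𝒟(ℳ_A(𝒟f)) for every linear map A : ℝⁿ → ℝᵐ. -/
open Set
open scoped RealInnerProductSpace

noncomputable section

/-!
Weak duality: if `𝒟f(Aᵀv) ≤ 1` then `⟪v, Ay⟫ = ⟪Aᵀv, y⟫ ≤ 𝒟f(Aᵀv) f(y) ≤ f(y)`.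
Strong duality: if `μ > 0` is the infimum of `f` on the affine subspace `{y | Ay = b}`, a
Hahn–Banach hyperplane separates that subspace from the open convex set `{f < μ}`. Being bounded
below on `{Ay = b}`, the separating functional vanishes on `Ker A`, hence is `⟪v, A ·⟫`, and a
rescaling of `v` is dual feasible with value `μ`. Since `Ker f ⊆ Ker A`, the kernel of
`ℳ_A(𝒟f)` is `Ker Aᵀ = (range A)ᗮ`, so `𝒟(ℳ_A(𝒟f))` does not see the difference between
`x` and `P_A x`.
-/

open Submodule ContinuousLinearMap
open scoped InnerProduct

lemma exists_mem_range_inner_apply_eq {E F : Type*} [NormedAddCommGroup E] [InnerProductSpace ℝ E]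
    [FiniteDimensional ℝ E] [NormedAddCommGroup F] [InnerProductSpace ℝ F] [CompleteSpace F]
    (A : E →L[ℝ] F) (φ : StrongDual ℝ E) (hφ : ∀ k, A k = 0 → φ k = 0) :
    ∃ v ∈ A.range, ∀ y, φ y = ⟪v, A y⟫ := by
  set w := (InnerProductSpace.toDual ℝ E).symm φ
  have hw : w ∈ A.kerᗮ := by
    rw [mem_orthogonal']
    intro k hk
    rw [InnerProductSpace.toDual_symm_apply]
    exact hφ k hk
  rw [orthogonal_ker, (closed_of_finiteDimensional _).submodule_topologicalClosure_eq] at hw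
  obtain ⟨v₀, hv₀⟩ := hw
  refine ⟨A.range.starProjection v₀, starProjection_apply_mem _ _, fun y => ?_⟩
  have hker : v₀ - A.range.starProjection v₀ ∈ (A†).ker := by
    rw [← orthogonal_range]
    exact sub_starProjection_mem_orthogonal v₀
  rw [LinearMap.mem_ker, coe_coe, map_sub, sub_eq_zero] at hker
  rw [coe_coe] at hv₀
  rw [← adjoint_inner_left, ← hker, hv₀, InnerProductSpace.toDual_symm_apply]

lemma normDual_le {n : ℕ} {g : Euc n → ℝ} {x : Euc n} {c : ℝ} (hg : g 0 ≤ 1)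
    (h : ∀ y, g y ≤ 1 → (∀ z, g z = 0 → ⟪y, z⟫ = 0) → ⟪y, x⟫ ≤ c) : NormDual g x ≤ c :=
  csSup_le ⟨0, 0, hg, fun z _ => inner_zero_left z, (inner_zero_left x).symm⟩
    (by rintro _ ⟨y, hy, hyK, rfl⟩; exact h y hy hyK)

lemma inner_le_normDual {n : ℕ} {g : Euc n → ℝ} {x y : Euc n} {c : ℝ}
    (hc : ∀ y, g y ≤ 1 → (∀ z, g z = 0 → ⟪y, z⟫ = 0) → ⟪y, x⟫ ≤ c)
    (hy : g y ≤ 1) (hyK : ∀ z, g z = 0 → ⟪y, z⟫ = 0) : ⟪y, x⟫ ≤ NormDual g x :=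
  le_csSup ⟨c, by rintro _ ⟨y, hy, hyK, rfl⟩; exact hc y hy hyK⟩ ⟨y, hy, hyK, rfl⟩

lemma normDual_add_of_eq_zero {n : ℕ} {g : Euc n → ℝ} (x : Euc n) {z : Euc n} (hz : g z = 0) :
    NormDual g (x + z) = NormDual g x := by
  unfold NormDual
  congr 1
  ext r
  constructor <;> rintro ⟨y, hy, hyK, rfl⟩ <;>
    exact ⟨y, hy, hyK, by rw [inner_add_right, hyK z hz, add_zero]⟩

namespace CHplus

variable {n : ℕ} {f : Euc n → ℝ}

lemma nonneg (hf : CHplus n 1 f) (x : Euc n) : 0 ≤ f x := hf.2.1 x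

lemma smul (hf : CHplus n 1 f) {t : ℝ} (ht : 0 < t) (x : Euc n) : f (t • x) = t * f x := by
  simpa using hf.2.2.1 t ht x

def ker (hf : CHplus n 1 f) : Submodule ℝ (Euc n) := hf.2.2.2.choose

lemma mem_ker (hf : CHplus n 1 f) {x : Euc n} : x ∈ hf.ker ↔ f x = 0 :=
  Set.ext_iff.1 hf.2.2.2.choose_spec x

lemma mem_orthogonal_ker (hf : CHplus n 1 f) {y : Euc n} :
    y ∈ hf.kerᗮ ↔ ∀ z, f z = 0 → ⟪y, z⟫ = 0 := by
  simp only [mem_orthogonal', hf.mem_ker]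

lemma map_zero (hf : CHplus n 1 f) : f 0 = 0 := hf.mem_ker.1 hf.ker.zero_mem

lemma add_le (hf : CHplus n 1 f) (x y : Euc n) : f (x + y) ≤ f x + f y := by
  have h := hf.1.2 (mem_univ x) (mem_univ y) (by norm_num : (0 : ℝ) ≤ 1 / 2)
    (by norm_num : (0 : ℝ) ≤ 1 / 2) (by norm_num)
  rw [show x + y = (2 : ℝ) • ((1 / 2 : ℝ) • x + (1 / 2 : ℝ) • y) by module, hf.smul two_pos]
  simp only [smul_eq_mul] at h
  linarith

lemma apply_add_of_mem_ker (hf : CHplus n 1 f) (x : Euc n) {k : Euc n} (hk : k ∈ hf.ker) :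
    f (x + k) = f x := by
  refine le_antisymm ((hf.add_le x k).trans_eq (by rw [hf.mem_ker.1 hk, add_zero])) ?_
  have h := hf.add_le (x + k) (-k)
  rwa [add_neg_cancel_right, hf.mem_ker.1 (hf.ker.neg_mem hk), add_zero] at h

lemma pos_of_mem_orthogonal_ker (hf : CHplus n 1 f) {y : Euc n} (hy : y ∈ hf.kerᗮ) (hy0 : y ≠ 0) :
    0 < f y := by
  refine (hf.nonneg y).lt_of_ne fun h => hy0 ?_
  exact (orthogonal_disjoint hf.ker).le_bot ⟨hf.mem_ker.2 h.symm, hy⟩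

lemma continuous (hf : CHplus n 1 f) : Continuous f :=
  continuousOn_univ.1 (by simpa using hf.1.continuousOn_interior)

lemma exists_norm_le_mul (hf : CHplus n 1 f) : ∃ c, ∀ y ∈ hf.kerᗮ, ‖y‖ ≤ c * f y := by
  set S := Metric.sphere (0 : Euc n) 1 ∩ hf.kerᗮ
  have hS : IsCompact S := (isCompact_sphere 0 1).inter_right (closed_of_finiteDimensional _)
  have hpos : ∀ y ∈ S, 0 < f y := fun y hy =>
    hf.pos_of_mem_orthogonal_ker hy.2 (ne_zero_of_mem_unit_sphere ⟨y, hy.1⟩)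
  obtain ⟨c, hc⟩ := hS.exists_bound_of_continuousOn
    (hf.continuous.continuousOn.inv₀ fun y hy => (hpos y hy).ne')
  refine ⟨c, fun y hy => ?_⟩
  rcases eq_or_ne y 0 with rfl | hy0
  · simp [hf.map_zero]
  have hny : 0 < ‖y‖ := norm_pos_iff.2 hy0
  have hu : ‖y‖⁻¹ • y ∈ S := ⟨by simp [norm_smul, hny.ne'], hf.kerᗮ.smul_mem _ hy⟩
  have h := (Real.le_norm_self _).trans (hc _ hu)
  rw [Pi.inv_apply, hf.smul (inv_pos.2 hny), mul_inv, inv_inv, ← div_eq_mul_inv,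
    div_le_iff₀ (hf.pos_of_mem_orthogonal_ker hy hy0)] at h
  exact h

lemma inner_le_normDual (hf : CHplus n 1 f) {x y : Euc n} (hy : f y ≤ 1) (hyK : y ∈ hf.kerᗮ) :
    ⟪y, x⟫ ≤ NormDual f x := by
  obtain ⟨c, hc⟩ := hf.exists_norm_le_mul
  refine _root_.inner_le_normDual (c := |c| * ‖x‖) (fun y' hy' hy'K => ?_) hy
    (hf.mem_orthogonal_ker.1 hyK)
  have hnorm : ‖y'‖ ≤ |c| := calc
    ‖y'‖ ≤ c * f y' := hc y' (hf.mem_orthogonal_ker.2 hy'K)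
    _ ≤ |c| * f y' := mul_le_mul_of_nonneg_right (le_abs_self c) (hf.nonneg y')
    _ ≤ |c| := mul_le_of_le_one_right (abs_nonneg c) hy'
  exact (real_inner_le_norm y' x).trans (mul_le_mul_of_nonneg_right hnorm (norm_nonneg x))

lemma normDual_nonneg (hf : CHplus n 1 f) (x : Euc n) : 0 ≤ NormDual f x := by
  simpa using hf.inner_le_normDual (x := x) (by rw [hf.map_zero]; exact zero_le_one) (zero_mem _)

lemma normDual_zero (hf : CHplus n 1 f) : NormDual f 0 = 0 :=
  le_antisymm
    (normDual_le (by rw [hf.map_zero]; exact zero_le_one) fun y _ _ => (inner_zero_right y).le)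
    (hf.normDual_nonneg 0)

lemma inner_le_normDual_mul (hf : CHplus n 1 f) {u : Euc n} (hu : u ∈ hf.kerᗮ) (y : Euc n) :
    ⟪u, y⟫ ≤ NormDual f u * f y := by
  set w := y - hf.ker.starProjection y
  have hwK : w ∈ hf.kerᗮ := sub_starProjection_mem_orthogonal y
  have hyw : y = w + hf.ker.starProjection y := (sub_add_cancel _ _).symm
  have hfy : f y = f w := by rw [hyw, hf.apply_add_of_mem_ker w (starProjection_apply_mem _ _)]
  have huy : ⟪u, y⟫ = ⟪u, w⟫ := by
    rw [hyw, inner_add_right, (mem_orthogonal' _ _).1 hu _ (starProjection_apply_mem _ _), add_zero]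
  rw [huy, hfy]
  rcases eq_or_ne w 0 with hw0 | hw0
  · rw [hw0, inner_zero_right, hf.map_zero, mul_zero]
  have hfw := hf.pos_of_mem_orthogonal_ker hwK hw0
  have h := hf.inner_le_normDual (x := u) (y := (f w)⁻¹ • w)
    (by rw [hf.smul (inv_pos.2 hfw), inv_mul_cancel₀ hfw.ne']) (smul_mem _ _ hwK)
  rw [real_inner_smul_left, inv_mul_le_iff₀ hfw, real_inner_comm] at h
  linarith

lemma map_eq_zero_of_normDual_eq_zero (hf : CHplus n 1 f) {u : Euc n} (hu : NormDual f u = 0) :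
    f u = 0 := by
  set w := u - hf.ker.starProjection u
  have hwK : w ∈ hf.kerᗮ := sub_starProjection_mem_orthogonal u
  have hw : NormDual f w = 0 := by
    rw [← hu, ← normDual_add_of_eq_zero w (hf.mem_ker.1 (starProjection_apply_mem hf.ker u)),
      sub_add_cancel]
  have h := hf.inner_le_normDual_mul hwK w
  rw [hw, zero_mul, real_inner_self_nonpos] at h
  rw [sub_eq_zero.1 h]
  exact hf.mem_ker.1 (starProjection_apply_mem _ _)

variable {m : ℕ} {A : Euc n →L[ℝ] Euc m}

lemma inner_apply_le (hf : CHplus n 1 f) (hKA : ∀ x, f x = 0 → A x = 0) {v : Euc m}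
    (hv : NormDual f ((A†) v) ≤ 1) (y : Euc n) : ⟪v, A y⟫ ≤ f y := by
  have hvK : (A†) v ∈ hf.kerᗮ := hf.mem_orthogonal_ker.2 fun z hz => by
    rw [adjoint_inner_left, hKA z hz, inner_zero_right]
  calc ⟪v, A y⟫ = ⟪(A†) v, y⟫ := (adjoint_inner_left A y v).symm
    _ ≤ NormDual f ((A†) v) * f y := hf.inner_le_normDual_mul hvK y
    _ ≤ f y := mul_le_of_le_one_left (hf.nonneg y) hv

lemma mop_normDual_eq_zero_iff (hf : CHplus n 1 f) (hKA : ∀ x, f x = 0 → A x = 0) {z : Euc m} :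
    Mop A (NormDual f) z = 0 ↔ (A†) z = 0 := by
  refine ⟨fun h => ?_, fun h => by simp only [Mop, h, hf.normDual_zero]⟩
  have hAA := hKA _ (hf.map_eq_zero_of_normDual_eq_zero h)
  rw [← inner_self_eq_zero (𝕜 := ℝ), adjoint_inner_left, hAA, inner_zero_right]

lemma exists_dual_inner_eq_of_le (hf : CHplus n 1 f) {b : Euc m} (hb : b ∈ A.range) {μ : ℝ}
    (hμ : 0 < μ) (hle : ∀ y, A y = b → μ ≤ f y) :
    ∃ v ∈ A.range, NormDual f ((A†) v) ≤ 1 ∧ ⟪v, b⟫ = μ := by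
  obtain ⟨y₀, rfl⟩ : ∃ y₀, A y₀ = b := hb
  have hU : Convex ℝ {y | f y < μ} := by simpa using hf.1.convex_lt μ
  have hUo : IsOpen {y | f y < μ} := isOpen_lt hf.continuous continuous_const
  have hE : Convex ℝ (A ⁻¹' {A y₀}) := (convex_singleton _).linear_preimage (A : Euc n →ₗ[ℝ] Euc m)
  have hdisj : Disjoint {y | f y < μ} (A ⁻¹' {A y₀}) :=
    Set.disjoint_left.2 fun y hyU hyE => (hle y hyE).not_gt hyU
  obtain ⟨φ, c, hφU, hφE⟩ := geometric_hahn_banach_open hU hUo hE hdisj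
  have hφker : ∀ k, A k = 0 → φ k = 0 := by
    intro k hk
    by_contra hφk
    have h := hφE (y₀ + ((c - 1 - φ y₀) / φ k) • k) (by simp [hk])
    rw [map_add, map_smul, smul_eq_mul, div_mul_cancel₀ _ hφk] at h
    linarith
  obtain ⟨v₀, hv₀, hφ⟩ := exists_mem_range_inner_apply_eq A φ hφker
  have hc : 0 < c := by simpa using hφU 0 (by simpa [hf.map_zero] using hμ)
  have hβ : 0 < φ y₀ := hc.trans_le (hφE y₀ rfl)
  refine ⟨(μ / φ y₀) • v₀, smul_mem _ _ hv₀,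
    normDual_le (by rw [hf.map_zero]; exact zero_le_one) fun y hy _ => ?_, ?_⟩
  · rw [map_smul, real_inner_smul_right, adjoint_inner_right, real_inner_comm, ← hφ,
      div_mul_eq_mul_div, div_le_one hβ]
    by_contra! h
    have hφy : 0 < φ y := pos_of_mul_pos_right (hβ.trans h) hμ.le
    have hs : 0 < φ y₀ / φ y := div_pos hβ hφy
    have hsU : f ((φ y₀ / φ y) • y) < μ := by
      rw [hf.smul hs]
      exact (mul_le_of_le_one_right hs.le hy).trans_lt ((div_lt_iff₀ hφy).2 h)
    have h' := hφU _ hsU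
    rw [map_smul, smul_eq_mul, div_mul_cancel₀ _ hφy.ne'] at h'
    linarith [hφE y₀ rfl]
  · rw [real_inner_smul_left, ← hφ, div_mul_cancel₀ _ hβ.ne']

theorem sInf_eq_normDual_mop (hf : CHplus n 1 f) (hKA : ∀ x, f x = 0 → A x = 0) {b : Euc m}
    (hb : b ∈ A.range) :
    sInf {r | ∃ y, A y = b ∧ r = f y} = NormDual (Mop A (NormDual f)) b := by
  obtain ⟨y₀, hy₀⟩ : ∃ y₀, A y₀ = b := hb
  have h0 : Mop A (NormDual f) 0 ≤ 1 := by simp [Mop, hf.normDual_zero]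
  have hweak : ∀ v, Mop A (NormDual f) v ≤ 1 → (∀ z, Mop A (NormDual f) z = 0 → ⟪v, z⟫ = 0) →
      ⟪v, b⟫ ≤ f y₀ := fun v hv _ => hy₀ ▸ hf.inner_apply_le hKA hv y₀
  refine le_antisymm ?_ (normDual_le h0 fun v hv _ => le_csInf ⟨f y₀, y₀, hy₀, rfl⟩ ?_)
  · rcases le_or_gt (sInf {r | ∃ y, A y = b ∧ r = f y}) 0 with hμ | hμ
    · exact hμ.trans (by simpa using _root_.inner_le_normDual hweak h0 (by simp))
    have hle : ∀ y, A y = b → sInf {r | ∃ y, A y = b ∧ r = f y} ≤ f y := fun y hy =>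
      csInf_le ⟨0, by rintro _ ⟨y, -, rfl⟩; exact hf.nonneg y⟩ ⟨y, hy, rfl⟩
    obtain ⟨v, hvA, hv, hvb⟩ := hf.exists_dual_inner_eq_of_le ⟨y₀, hy₀⟩ hμ hle
    obtain ⟨y₁, rfl⟩ : ∃ y₁, A y₁ = v := hvA
    rw [← hvb]
    refine _root_.inner_le_normDual hweak hv fun z hz => ?_
    rw [← adjoint_inner_right, (hf.mop_normDual_eq_zero_iff hKA).1 hz, inner_zero_right]
  · rintro _ ⟨y, rfl, rfl⟩
    exact hf.inner_apply_le hKA hv y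

theorem pop_eq_normDual_mop (hf : CHplus n 1 f) (A : Euc n →L[ℝ] Euc m)
    (hKA : ∀ x, f x = 0 → A x = 0) : Pop A f = NormDual (Mop A (NormDual f)) := by
  funext x
  set b := A.range.starProjection x
  have hxb : (A†) (x - b) = 0 := by
    have h := sub_starProjection_mem_orthogonal (K := A.range) x
    rwa [orthogonal_range] at h
  calc Pop A f x = sInf {r | ∃ y, A y = b ∧ r = f y} := rfl
    _ = NormDual (Mop A (NormDual f)) b :=
      hf.sInf_eq_normDual_mop hKA (starProjection_apply_mem _ x)
    _ = NormDual (Mop A (NormDual f)) x := by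
      rw [← normDual_add_of_eq_zero b ((hf.mop_normDual_eq_zero_iff hKA).2 hxb), add_sub_cancel]

end CHplus

/-- `𝒫_A f = 𝒟(ℳ_A(𝒟f))` when `Ker f ⊆ Ker A`; in particular for all `A`
when `f` is positive definite. -/
theorem stmt_3 {n m : ℕ} (f : Euc n → ℝ) (hf : CHplus n 1 f) :
    (∀ A : Euc n →L[ℝ] Euc m, (∀ x, f x = 0 → A x = 0) →
      Pop A f = NormDual (Mop A (NormDual f))) ∧
    ((∀ x : Euc n, x ≠ 0 → 0 < f x) →
      ∀ A : Euc n →L[ℝ] Euc m, Pop A f = NormDual (Mop A (NormDual f))) := by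
  refine ⟨hf.pop_eq_normDual_mop, fun hpos A => hf.pop_eq_normDual_mop A fun x hx => ?_⟩
  obtain rfl : x = 0 := by_contra fun hx0 => (hpos x hx0).ne' hx
  exact map_zero A

end
end

section
/- Let g ∈ CH⁺₁(ℝⁿ) be an even function and let S ⊆ ℝⁿ be a compact symmetric set. Then genus(S) ≤ genus(∂g(S)), where ∂g(S) = ⋃_{x∈S} ∂g(x). -/
open Set
open scoped RealInnerProductSpace

noncomputable section

/-!
The subdifferential of the sublinear function `g` is upper semicontinuous with nonempty compact
convex values, and `∂g(-x) = -∂g(x)`. Cellina's approximate selection, made odd by averaging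
`ψ x` with `-ψ (-x)`, yields for every `ε > 0` a continuous odd map sending `S` into the
`ε`-neighbourhood of `T = ∂g(S)`. An odd map witnessing the genus of the compact set `T` extends
(Tietze, then symmetrisation) to an odd continuous map on `ℝⁿ` that does not vanish on some
`ε`-neighbourhood of `T`; composing it with the selection witnesses the same bound for `S`.
-/

open Metric Filter Topology

section Topology

universe u v

variable {E : Type u} {F : Type v}

theorem exists_continuous_odd_forall_mem_convex [NormedAddCommGroup E] [NormedAddCommGroup F]
    [NormedSpace ℝ F] {t : E → Set F} (ht : ∀ x, Convex ℝ (t x))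
    (hneg : ∀ x, ∀ v ∈ t x, -v ∈ t (-x)) (H : ∀ x, ∃ c, ∀ᶠ y in 𝓝 x, c ∈ t y) :
    ∃ f : E → F, Continuous f ∧ (∀ x, f (-x) = -f x) ∧ ∀ x, f x ∈ t x := by
  obtain ⟨f, hf⟩ := exists_continuous_forall_mem_convex_of_local_const ht H
  refine ⟨fun x => (2⁻¹ : ℝ) • (f x - f (-x)), by fun_prop, fun x => ?_, fun x => ?_⟩
  · simp only [neg_neg, ← smul_neg, neg_sub]
  · have hfx' : -f (-x) ∈ t x := by simpa only [neg_neg] using hneg (-x) _ (hf (-x))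
    have := ht x (hf x) hfx' (by norm_num : (0 : ℝ) ≤ 2⁻¹) (by norm_num : (0 : ℝ) ≤ 2⁻¹)
      (by norm_num)
    rwa [smul_neg, ← sub_eq_add_neg, ← smul_sub] at this

theorem IsClosed.exists_continuous_odd_extension [NormedAddCommGroup E] [NormedAddCommGroup F]
    [NormedSpace ℝ F] [TietzeExtension.{u} F] {T : Set E} (hT : IsClosed T)
    (hTs : ∀ z ∈ T, -z ∈ T) {φ : E → F} (hφ : ContinuousOn φ T)
    (hφodd : ∀ z ∈ T, φ (-z) = -φ z) :
    ∃ Φ : E → F, Continuous Φ ∧ (∀ z, Φ (-z) = -Φ z) ∧ EqOn Φ φ T := by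
  obtain ⟨Φ₀, hΦ₀⟩ := ContinuousMap.exists_restrict_eq hT ⟨T.domRestrict φ, hφ.domRestrict⟩
  have hΦ₀T : ∀ z ∈ T, Φ₀ z = φ z := fun z hz => DFunLike.congr_fun hΦ₀ ⟨z, hz⟩
  refine ⟨fun z => (2⁻¹ : ℝ) • (Φ₀ z - Φ₀ (-z)), by fun_prop, fun z => ?_, fun z hz => ?_⟩
  · simp only [neg_neg, ← smul_neg, neg_sub]
  · simp only [hΦ₀T z hz, hΦ₀T (-z) (hTs z hz), hφodd z hz, sub_neg_eq_add, ← two_smul ℝ,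
      smul_smul]
    norm_num

theorem IsCompact.exists_forall_ball_of_eventually [PseudoMetricSpace E] {S : Set E}
    (hS : IsCompact S) {P : E → E → Prop} (hP : ∀ x ∈ S, ∀ᶠ z in 𝓝 x, P x z) :
    ∃ r > 0, ∀ y ∈ S, ∃ x ∈ S, ∀ z ∈ ball y r, P x z := by
  obtain ⟨r, hr, h⟩ := lebesgue_number_lemma_of_metric hS
    (c := fun x : S => interior {z | P x z}) (fun _ => isOpen_interior)
    (fun x hx => mem_iUnion.2 ⟨⟨x, hx⟩, mem_interior_iff_mem_nhds.2 (hP x hx)⟩)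
  refine ⟨r, hr, fun y hy => ?_⟩
  obtain ⟨x, hx⟩ := h y hy
  exact ⟨x, x.2, fun z hz => interior_subset (hx hz)⟩

variable [TopologicalSpace E] [PseudoMetricSpace F] {Φ : E → Set F} {K : Set F}

theorem eventually_subset_thickening_of_isClosed_graph
    (hgraph : IsClosed {p : E × F | p.2 ∈ Φ p.1}) (hK : IsCompact K) (hΦK : ∀ x, Φ x ⊆ K) (x : E)
    {ε : ℝ} (hε : 0 < ε) :
    ∀ᶠ z in 𝓝 x, Φ z ⊆ thickening ε (Φ x) := by
  have hfar : ∀ v ∈ K \ thickening ε (Φ x), ∀ᶠ p : E × F in 𝓝 (x, v), p.2 ∉ Φ p.1 :=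
    fun v hv => hgraph.isOpen_compl.mem_nhds fun hxv => hv.2 (self_subset_thickening hε _ hxv)
  filter_upwards [(hK.diff isOpen_thickening).eventually_forall_of_forall_eventually
      (P := fun z v => v ∉ Φ z) hfar]
    with z hz v hv
  by_contra hvε
  exact hz v ⟨hΦK z hv, hvε⟩ hv

theorem IsCompact.biUnion_of_isClosed_graph {S : Set E} (hS : IsCompact S)
    (hgraph : IsClosed {p : E × F | p.2 ∈ Φ p.1}) (hK : IsCompact K) (hΦK : ∀ x, Φ x ⊆ K) :
    IsCompact (⋃ x ∈ S, Φ x) := by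
  have hT : (⋃ x ∈ S, Φ x) = Prod.snd '' ((S ×ˢ K) ∩ {p : E × F | p.2 ∈ Φ p.1}) := by
    ext v
    simp only [mem_iUnion₂, mem_image, mem_inter_iff, mem_prod, mem_ofPred_eq, Prod.exists,
      exists_eq_right]
    exact ⟨fun ⟨x, hx, hv⟩ => ⟨x, ⟨hx, hΦK x hv⟩, hv⟩, fun ⟨x, ⟨hx, _⟩, hv⟩ => ⟨x, hx, hv⟩⟩
  rw [hT]
  exact ((hS.prod hK).inter_right hgraph).image continuous_snd

end Topology

section Genus

variable {n : ℕ}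

theorem genus_le_of_odd {m : ℕ} {S : Set (Euc n)} {φ : Euc n → Euc m} (hφ : ContinuousOn φ S)
    (hφ0 : ∀ x ∈ S, φ x ≠ 0) (hφodd : ∀ x ∈ S, φ (-x) = -φ x) : genus S ≤ m :=
  sInf_le ⟨m, rfl, φ, hφ, hφ0, hφodd⟩

theorem genus_le_genus_of_odd_mapsTo {k : ℕ} {S : Set (Euc n)} {U : Set (Euc k)}
    {ψ : Euc n → Euc k} (hψ : ContinuousOn ψ S) (hψU : MapsTo ψ S U)
    (hψodd : ∀ x ∈ S, ψ (-x) = -ψ x) : genus S ≤ genus U := by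
  refine le_sInf ?_
  rintro _ ⟨m, rfl, φ, hφ, hφ0, hφodd⟩
  refine genus_le_of_odd (hφ.comp hψ hψU) (fun x hx => hφ0 _ (hψU hx)) fun x hx => ?_
  simp only [Function.comp, hψodd x hx, hφodd _ (hψU hx)]

theorem genus_le_genus_of_forall_thickening {S T : Set (Euc n)} (hT : IsCompact T)
    (hTs : ∀ z ∈ T, -z ∈ T)
    (hψ : ∀ ε > 0, ∃ ψ : Euc n → Euc n, ContinuousOn ψ S ∧ MapsTo ψ S (thickening ε T) ∧
      ∀ x ∈ S, ψ (-x) = -ψ x) :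
    genus S ≤ genus T := by
  refine le_sInf ?_
  rintro _ ⟨m, rfl, φ, hφ, hφ0, hφodd⟩
  obtain ⟨Φ, hΦ, hΦodd, hΦφ⟩ := hT.isClosed.exists_continuous_odd_extension hTs hφ hφodd
  obtain ⟨ε, hε, hεT⟩ := hT.exists_thickening_subset_open
    (hΦ.isOpen_preimage _ isOpen_compl_singleton)
    fun z hz => (hΦφ hz ▸ hφ0 z hz : Φ z ≠ 0)
  obtain ⟨ψ, hψ, hψT, hψodd⟩ := hψ ε hε
  calc genus S ≤ genus (thickening ε T) := genus_le_genus_of_odd_mapsTo hψ hψT hψodd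
    _ ≤ m := genus_le_of_odd hΦ.continuousOn (fun z hz => hεT hz) fun z _ => hΦodd z

end Genus

section Subdiff

variable {n : ℕ} {g : Euc n → ℝ}

theorem convex_subdiff (x : Euc n) : Convex ℝ (subdiff g x) := by
  intro v hv w hw a b ha hb hab y
  rw [inner_add_left, real_inner_smul_left, real_inner_smul_left]
  calc a * ⟪v, y - x⟫ + b * ⟪w, y - x⟫ ≤ a * (g y - g x) + b * (g y - g x) := by
        gcongr
        exacts [hv y, hw y]
    _ = g y - g x := by rw [← add_mul, hab, one_mul]

theorem isClosed_graph_subdiff (hcont : Continuous g) :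
    IsClosed {p : Euc n × Euc n | p.2 ∈ subdiff g p.1} := by
  change IsClosed {p : Euc n × Euc n | ∀ y, ⟪p.2, y - p.1⟫ ≤ g y - g p.1}
  rw [ofPred_forall]
  exact isClosed_iInter fun y => isClosed_le (by fun_prop) (by fun_prop)

theorem neg_mem_subdiff_neg (hge : ∀ x, g (-x) = g x) {x v : Euc n} (hv : v ∈ subdiff g x) :
    -v ∈ subdiff g (-x) := by
  intro y
  calc ⟪-v, y - -x⟫ = ⟪v, -y - x⟫ := by
        rw [show y - -x = -(-y - x) by abel, inner_neg_left, inner_neg_right, neg_neg]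
    _ ≤ g (-y) - g x := hv (-y)
    _ = g y - g (-x) := by rw [hge, hge]

theorem map_zero_of_homogeneous (hhom : ∀ t : ℝ, 0 < t → ∀ x, g (t • x) = t * g x) : g 0 = 0 := by
  have := hhom 2 two_pos 0
  rw [smul_zero] at this
  linarith

theorem mem_subdiff_iff_of_homogeneous (hhom : ∀ t : ℝ, 0 < t → ∀ x, g (t • x) = t * g x)
    {x v : Euc n} : v ∈ subdiff g x ↔ (∀ y, ⟪v, y⟫ ≤ g y) ∧ ⟪v, x⟫ = g x := by
  have hg0 := map_zero_of_homogeneous hhom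
  constructor
  · intro hv
    have h2 := hv ((2 : ℝ) • x)
    have h0 := hv 0
    rw [hhom 2 two_pos, two_smul, add_sub_cancel_right] at h2
    rw [hg0, zero_sub, inner_neg_right] at h0
    have hvx : ⟪v, x⟫ = g x := by linarith
    refine ⟨fun y => ?_, hvx⟩
    have hy := hv y
    rw [inner_sub_right] at hy
    linarith
  · rintro ⟨hle, hvx⟩ y
    rw [inner_sub_right, hvx]
    linarith [hle y]

theorem subdiff_subset_subdiff_zero (hhom : ∀ t : ℝ, 0 < t → ∀ x, g (t • x) = t * g x)
    (x : Euc n) : subdiff g x ⊆ subdiff g 0 := fun v hv =>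
  (mem_subdiff_iff_of_homogeneous hhom).2
    ⟨((mem_subdiff_iff_of_homogeneous hhom).1 hv).1, by simp [map_zero_of_homogeneous hhom]⟩

theorem isCompact_subdiff_zero (hcont : Continuous g)
    (hhom : ∀ t : ℝ, 0 < t → ∀ x, g (t • x) = t * g x) : IsCompact (subdiff g 0) := by
  obtain ⟨M, hM⟩ := (isCompact_closedBall (0 : Euc n) 1).exists_bound_of_continuousOn
    hcont.continuousOn
  refine Metric.isCompact_of_isClosed_isBounded
    ((isClosed_graph_subdiff hcont).preimage (by fun_prop : Continuous fun v => ((0 : Euc n), v)))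
    ((isBounded_closedBall (x := 0) (r := M)).subset fun v hv => ?_)
  rw [mem_closedBall_zero_iff]
  rcases eq_or_ne v 0 with rfl | hv0
  · simpa using (norm_nonneg _).trans (hM 0 (by simp))
  have hle := ((mem_subdiff_iff_of_homogeneous hhom).1 hv).1
  calc ‖v‖ = ⟪v, ‖v‖⁻¹ • v⟫ := by
        rw [real_inner_smul_right, real_inner_self_eq_norm_sq]
        field_simp
    _ ≤ g (‖v‖⁻¹ • v) := hle _
    _ ≤ M := (le_abs_self _).trans (hM _ (by simp [norm_smul, hv0]))

theorem subdiff_nonempty (hconv : ConvexOn ℝ univ g)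
    (hhom : ∀ t : ℝ, 0 < t → ∀ x, g (t • x) = t * g x) (x : Euc n) :
    (subdiff g x).Nonempty := by
  have hg0 := map_zero_of_homogeneous hhom
  have hadd : ∀ y z, g (y + z) ≤ g y + g z := fun y z => by
    have := hconv.2 (mem_univ y) (mem_univ z) (by norm_num : (0 : ℝ) ≤ 2⁻¹)
      (by norm_num : (0 : ℝ) ≤ 2⁻¹) (by norm_num)
    rw [← smul_add, hhom 2⁻¹ (by norm_num), smul_eq_mul, smul_eq_mul] at this
    linarith
  have hsmul : ∀ c : ℝ, c * g x ≤ g (c • x) := fun c => by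
    rcases lt_trichotomy c 0 with hc | rfl | hc
    · have h := hadd (c • x) ((-c) • x)
      rw [← add_smul, add_neg_cancel, zero_smul, hg0, hhom _ (neg_pos.2 hc)] at h
      nlinarith
    · simp [hg0]
    · rw [hhom c hc]
  -- Hahn–Banach: extend `c • x ↦ c * g x` to a linear functional dominated by `g`
  set f : Euc n →ₗ.[ℝ] ℝ := LinearPMap.mkSpanSingleton' x (g x) fun c hc => by
    rcases smul_eq_zero.1 hc with rfl | rfl
    · exact zero_smul _ _
    · rw [hg0, smul_zero]
  have hdom : f.domain = ℝ ∙ x := LinearPMap.domain_mkSpanSingleton _ _ _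
  obtain ⟨ℓ, hℓx, hℓg⟩ := exists_extension_of_le_sublinear f g hhom hadd (by
    rintro ⟨z, hz⟩
    obtain ⟨c, rfl⟩ := Submodule.mem_span_singleton.1 (hdom ▸ hz)
    rw [LinearPMap.mkSpanSingleton'_apply, RingHom.id_apply, smul_eq_mul]
    exact hsmul c)
  have hxdom : x ∈ f.domain := hdom ▸ Submodule.mem_span_singleton_self x
  refine ⟨(InnerProductSpace.toDual ℝ (Euc n)).symm (LinearMap.toContinuousLinearMap ℓ),
    (mem_subdiff_iff_of_homogeneous hhom).2 ⟨fun y => ?_, ?_⟩⟩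
  · rw [InnerProductSpace.toDual_symm_apply]
    exact hℓg y
  · rw [InnerProductSpace.toDual_symm_apply, LinearMap.coe_toContinuousLinearMap']
    exact (hℓx ⟨x, hxdom⟩).trans (LinearPMap.mkSpanSingleton'_apply_self _ _ _ hxdom)

theorem exists_continuous_odd_mapsTo_thickening_biUnion_subdiff (hconv : ConvexOn ℝ univ g)
    (hhom : ∀ t : ℝ, 0 < t → ∀ x, g (t • x) = t * g x) (hge : ∀ x, g (-x) = g x)
    {S : Set (Euc n)} (hS : IsCompact S) {ε : ℝ} (hε : 0 < ε) :
    ∃ ψ : Euc n → Euc n, Continuous ψ ∧ (∀ x, ψ (-x) = -ψ x) ∧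
      MapsTo ψ S (thickening ε (⋃ x ∈ S, subdiff g x)) := by
  have hcont : Continuous g := continuousOn_univ.1 (hconv.continuousOn isOpen_univ)
  obtain ⟨r, hr, hSr⟩ := hS.exists_forall_ball_of_eventually
    (P := fun x z => subdiff g z ⊆ thickening ε (subdiff g x)) fun x _ =>
      eventually_subset_thickening_of_isClosed_graph (isClosed_graph_subdiff hcont)
        (isCompact_subdiff_zero hcont hhom) (subdiff_subset_subdiff_zero hhom) x hε
  obtain ⟨ψ, hψ, hψodd, hψmem⟩ := exists_continuous_odd_forall_mem_convex
    (t := fun y => convexHull ℝ (⋃ z ∈ ball y r, subdiff g z)) (fun y => convex_convexHull ℝ _)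
    (fun y v hv => by
      have hv' : -v ∈ convexHull ℝ (-⋃ z ∈ ball y r, subdiff g z) := by
        rw [convexHull_neg]
        exact Set.neg_mem_neg.2 hv
      refine convexHull_mono (fun w hw => ?_) hv'
      obtain ⟨z, hz, hwz⟩ := mem_iUnion₂.1 (Set.mem_neg.1 hw)
      refine mem_iUnion₂.2 ⟨-z, by rwa [mem_ball, dist_neg_neg], ?_⟩
      simpa using neg_mem_subdiff_neg hge hwz)
    (fun y => ⟨(subdiff_nonempty hconv hhom y).some, by
      filter_upwards [ball_mem_nhds y hr] with y' hy'
      exact subset_convexHull ℝ _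
        (mem_iUnion₂.2 ⟨y, mem_ball_comm.1 hy', (subdiff_nonempty hconv hhom y).some_mem⟩)⟩)
  refine ⟨ψ, hψ, hψodd, fun y hy => ?_⟩
  obtain ⟨x, hx, hxy⟩ := hSr y hy
  have hhull : convexHull ℝ (⋃ z ∈ ball y r, subdiff g z) ⊆ thickening ε (subdiff g x) :=
    ((convex_subdiff x).thickening ε).convexHull_subset_iff.2 (iUnion₂_subset hxy)
  exact thickening_subset_of_subset ε (subset_biUnion_of_mem (u := (subdiff g ·)) hx)
    (hhull (hψmem y))

end Subdiff

/-- the Krasnoselskii genus does not decrease under the subgradient map of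
an even function `g ∈ CH⁺₁(ℝⁿ)`. -/
theorem stmt_9 {n : ℕ} (g : Euc n → ℝ) (hg : CHplus n 1 g) (hge : ∀ x, g (-x) = g x)
    (S : Set (Euc n)) (hSc : IsCompact S) (hSs : ∀ x ∈ S, -x ∈ S) :
    genus S ≤ genus (⋃ x ∈ S, subdiff g x) := by
  obtain ⟨hconv, -, hhom, -⟩ := hg
  replace hhom : ∀ t : ℝ, 0 < t → ∀ x, g (t • x) = t * g x := by simpa using hhom
  have hcont : Continuous g := continuousOn_univ.1 (hconv.continuousOn isOpen_univ)
  refine genus_le_genus_of_forall_thickening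
    (hSc.biUnion_of_isClosed_graph (isClosed_graph_subdiff hcont)
      (isCompact_subdiff_zero hcont hhom) (subdiff_subset_subdiff_zero hhom))
    (fun v hv => ?_) fun ε hε => ?_
  · obtain ⟨x, hx, hvx⟩ := mem_iUnion₂.1 hv
    exact mem_iUnion₂.2 ⟨-x, hSs x hx, neg_mem_subdiff_neg hge hvx⟩
  · obtain ⟨ψ, hψ, hψodd, hψS⟩ :=
      exists_continuous_odd_mapsTo_thickening_biUnion_subdiff hconv hhom hge hSc hε
    exact ⟨ψ, hψ.continuousOn, hψS, fun x _ => hψodd x⟩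

end
end

section
/- Let f ∈ CH⁺₁(ℝᵐ), g ∈ CH⁺₁(ℝⁿ), and let A : ℝⁿ → ℝᵐ be a linear map. Define g_{Ker(A)}(x) = inf_{z ∈ Ker(A)} g(x + z). If (λ, x) is an eigenpair of the pair (f∘A, g) with λ ≠ 0, then g(x) = g_{Ker(A)}(x). -/
open Set
open scoped RealInnerProductSpace

noncomputable section

/-! `f ∘ A` is invariant under translation by `Ker A`, so its subgradients are orthogonal to
`Ker A`. Since `λ ≠ 0`, the subgradient `w ∈ ∂g(x)` with `λ w ∈ ∂(f ∘ A)(x)` is orthogonal to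
`Ker A` as well, and then `g (x + z) ≥ g x + ⟪w, z⟫ = g x` for every `z ∈ Ker A`. -/

theorem inner_eq_zero_of_mem_subdiff_comp {n m : ℕ} {f : Euc m → ℝ} {A : Euc n →L[ℝ] Euc m}
    {x v z : Euc n} (hv : v ∈ subdiff (fun y => f (A y)) x) (hz : A z = 0) : ⟪v, z⟫ = 0 := by
  have h_add : ⟪v, z⟫ ≤ 0 := by simpa [hz] using hv (x + z)
  have h_sub : -⟪v, z⟫ ≤ 0 := by simpa [hz, inner_neg_right] using hv (x + -z)
  linarith

theorem le_apply_add_of_mem_subdiff {n : ℕ} {g : Euc n → ℝ} {x w z : Euc n}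
    (hw : w ∈ subdiff g x) (hwz : ⟪w, z⟫ = 0) : g x ≤ g (x + z) := by
  have := hw (x + z)
  rw [add_sub_cancel_left, hwz] at this
  linarith

theorem csInf_apply_add_eq_of_le {n m : ℕ} {g : Euc n → ℝ} {A : Euc n →L[ℝ] Euc m} {x : Euc n}
    (hle : ∀ z, A z = 0 → g x ≤ g (x + z)) :
    sInf {r : ℝ | ∃ z : Euc n, A z = 0 ∧ r = g (x + z)} = g x :=
  IsLeast.csInf_eq ⟨⟨0, map_zero A, by rw [add_zero]⟩, by rintro r ⟨z, hz, rfl⟩; exact hle z hz⟩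

theorem stmt_11_general {n m : ℕ} (f : Euc m → ℝ) (g : Euc n → ℝ)
    (A : Euc n →L[ℝ] Euc m) (lam : ℝ) (x : Euc n) (hlam : lam ≠ 0)
    (hep : IsEigenpair (fun y => f (A y)) g lam x) :
    g x = sInf {r : ℝ | ∃ z : Euc n, A z = 0 ∧ r = g (x + z)} := by
  obtain ⟨w, hw, hlw⟩ := hep
  have hw_perp : ∀ z, A z = 0 → ⟪w, z⟫ = 0 := fun z hz => by
    have := inner_eq_zero_of_mem_subdiff_comp hlw hz
    rwa [real_inner_smul_left, mul_eq_zero, or_iff_right hlam] at this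
  exact (csInf_apply_add_eq_of_le fun z hz => le_apply_add_of_mem_subdiff hw (hw_perp z hz)).symm

/-- eigenvectors of nonzero eigenvalues of `(f ∘ A, g)` realize the infimum
of `g` over their coset modulo `Ker A`. -/
theorem stmt_11 {n m : ℕ} (f : Euc m → ℝ) (g : Euc n → ℝ)
    (hf : CHplus m 1 f) (hg : CHplus n 1 g)
    (A : Euc n →L[ℝ] Euc m) (lam : ℝ) (x : Euc n) (hlam : lam ≠ 0)
    (hep : IsEigenpair (fun y => f (A y)) g lam x) :
    g x = sInf {r : ℝ | ∃ z : Euc n, A z = 0 ∧ r = g (x + z)} :=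
  stmt_11_general f g A lam x hlam hep

end
end

section
/- Let p ≥ 1 and r ≥ 1/p, and let f : ℝⁿ → [0, ∞) be positively p-homogeneous. Then f is convex if and only if f^r is convex. Moreover, if p > 1 and f ∈ CH⁺_p(ℝⁿ), then ℒf = ((p−1)/p^{p*})·(𝒟(f^{1/p}))^{p*} and 𝒜f = ((p−1)^{p−1}/p^p)·(𝒟(f^{1/p}))^p, where p* = p/(p−1). -/
open Set
open scoped RealInnerProductSpace

noncomputable section

/-!
The root `f ^ (1 / q)` of a nonnegative convex `q`-homogeneous `f` is `1`-homogeneous with convex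
unit sublevel set `{f ≤ 1}`, so it is subadditive like a gauge, hence convex; then
`f ^ r = (f ^ (1 / q)) ^ (q r)` with `q r ≥ 1`. Conversely `f = (f ^ r) ^ (1 / r)`, where `f ^ r` is
`q r`-homogeneous and `1 / r ≥ 1 / (q r)`.

For the transforms let `g = f ^ (1 / p)` and `D = 𝒟g(x)`. The supremum defining `D` is attained
on the compact set `Kᗮ ∩ {f ≤ 1}`, and rescaling gives `⟪x, y⟫ ≤ g y * D` on `Kᗮ`. This reduces
`ℒf(x)` and `𝒜f(x)` to `sup_{s ≥ 0} (s D - s ^ p)` and `sup_{s > 0} (s D - 1) / s ^ p`, which the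
tangent-line inequality for `s ↦ s ^ p` evaluates; both suprema are attained on the ray through
a maximiser for `D`, except `𝒜f(x)` when `D = 0`, which is only approached as `s → ∞`.
-/

open Real Filter Topology
open scoped Pointwise

section Scalar

variable {p : ℝ}

theorem tangent_le_rpow (hp : 1 < p) {s₀ s : ℝ} (hs₀ : 0 ≤ s₀) (hs : 0 ≤ s) :
    s₀ ^ p + p * s₀ ^ (p - 1) * (s - s₀) ≤ s ^ p := by
  rcases hs₀.eq_or_lt with rfl | hs₀
  · simp [zero_rpow (by linarith : p ≠ 0), zero_rpow (by linarith : p - 1 ≠ 0)]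
    positivity
  have bernoulli := one_add_mul_self_le_rpow_one_add (s := s / s₀ - 1) (by
    have : 0 ≤ s / s₀ := by positivity
    linarith) hp.le
  rw [add_sub_cancel, div_rpow hs hs₀.le, le_div_iff₀ (by positivity)] at bernoulli
  have : s₀ ^ p = s₀ ^ (p - 1) * s₀ := by
    rw [← rpow_add_one hs₀.ne', sub_add_cancel]
  rw [this] at bernoulli ⊢
  have hs₀' := hs₀.ne'
  field_simp at bernoulli
  nlinarith [bernoulli]

theorem legendre_rpow_eq (hp : 1 < p) {D : ℝ} (hD : 0 ≤ D) :
    (D / p) ^ (1 / (p - 1)) * D - ((D / p) ^ (1 / (p - 1))) ^ p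
      = (p - 1) / p ^ (p / (p - 1)) * D ^ (p / (p - 1)) := by
  have hp1 : p - 1 ≠ 0 := by linarith
  have hDp : 0 ≤ D / p := by positivity
  have hpow : ((D / p) ^ (1 / (p - 1))) ^ p = (D / p) ^ (p / (p - 1)) := by
    rw [← rpow_mul hDp]; congr 1; field_simp
  have hmul : (D / p) ^ (1 / (p - 1)) * D = p * (D / p) ^ (p / (p - 1)) := by
    have : p / (p - 1) = 1 / (p - 1) + 1 := by field_simp; ring
    rw [this, rpow_add' hDp (by rw [← this]; positivity), rpow_one]
    field_simp
  rw [hpow, hmul, div_rpow hD (by linarith)]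
  ring

theorem legendre_rpow_le (hp : 1 < p) {D s : ℝ} (hD : 0 ≤ D) (hs : 0 ≤ s) :
    s * D - s ^ p ≤ (p - 1) / p ^ (p / (p - 1)) * D ^ (p / (p - 1)) := by
  set s₀ := (D / p) ^ (1 / (p - 1))
  have hslope : p * s₀ ^ (p - 1) = D := by
    rw [← rpow_mul (by positivity), one_div_mul_cancel (by linarith), rpow_one]
    field_simp
  have tangent := tangent_le_rpow hp (by positivity : 0 ≤ s₀) hs
  rw [hslope] at tangent
  rw [← legendre_rpow_eq hp hD]
  linarith

theorem polar_rpow_eq (hp : 1 < p) :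
    p / (p - 1) - 1 = (p - 1) ^ (p - 1) / p ^ p * (p / (p - 1)) ^ p := by
  have hp1 : 0 < p - 1 := by linarith
  have : (p - 1) ^ p = (p - 1) ^ (p - 1) * (p - 1) := by
    rw [← rpow_add_one hp1.ne', sub_add_cancel]
  rw [div_rpow (by linarith) hp1.le, this]
  have : 0 < p ^ p := by positivity
  have : 0 < (p - 1) ^ (p - 1) := by positivity
  field_simp
  ring

theorem polar_rpow_le (hp : 1 < p) {u : ℝ} (hu : 0 ≤ u) :
    u - 1 ≤ (p - 1) ^ (p - 1) / p ^ p * u ^ p := by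
  have hp1 : 0 < p - 1 := by linarith
  have hslope : (p - 1) ^ (p - 1) / p ^ p * (p * (p / (p - 1)) ^ (p - 1)) = 1 := by
    have : p ^ p = p * p ^ (p - 1) := by
      rw [mul_comm, ← rpow_add_one (by linarith), sub_add_cancel]
    rw [div_rpow (by linarith) hp1.le, this]
    have : 0 < p ^ (p - 1) := by positivity
    have : 0 < (p - 1) ^ (p - 1) := by positivity
    field_simp
  have tangent := mul_le_mul_of_nonneg_left
    (tangent_le_rpow hp (by positivity : 0 ≤ p / (p - 1)) hu)
    (by positivity : 0 ≤ (p - 1) ^ (p - 1) / p ^ p)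
  rw [mul_add, ← polar_rpow_eq hp, ← mul_assoc, hslope] at tangent
  linarith

theorem polar_rpow_div_le (hp : 1 < p) {γ D : ℝ} (hγ : 0 < γ) (hD : 0 ≤ D) :
    (γ * D - 1) / γ ^ p ≤ (p - 1) ^ (p - 1) / p ^ p * D ^ p := by
  have := polar_rpow_le hp (mul_nonneg hγ.le hD)
  rw [mul_rpow hγ.le hD] at this
  rw [div_le_iff₀ (by positivity)]
  linarith

theorem polar_rpow_div_eq (hp : 1 < p) {D : ℝ} (hD : 0 < D) :
    (p / (p - 1) / D * D - 1) / (p / (p - 1) / D) ^ p = (p - 1) ^ (p - 1) / p ^ p * D ^ p := by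
  have : 0 < p / (p - 1) := div_pos (by linarith) (by linarith)
  rw [div_mul_cancel₀ _ hD.ne', polar_rpow_eq hp, div_rpow this.le hD.le]
  have : 0 < (p / (p - 1)) ^ p := by positivity
  have : 0 < D ^ p := by positivity
  field_simp

end Scalar

def PosHomogeneous {E : Type*} [SMul ℝ E] (q : ℝ) (f : E → ℝ) : Prop :=
  ∀ t : ℝ, 0 < t → ∀ x, f (t • x) = t ^ q * f x

theorem ConvexOn.rpow {E : Type*} [AddCommGroup E] [Module ℝ E] {S : Set E} {g : E → ℝ}
    (hg : ConvexOn ℝ S g) (hg0 : ∀ x ∈ S, 0 ≤ g x) {s : ℝ} (hs : 1 ≤ s) :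
    ConvexOn ℝ S (fun x => g x ^ s) := by
  refine ⟨hg.1, fun u hu v hv a b ha hb hab => ?_⟩
  calc g (a • u + b • v) ^ s ≤ (a * g u + b * g v) ^ s :=
        rpow_le_rpow (hg0 _ (hg.1 hu hv ha hb hab)) (hg.2 hu hv ha hb hab) (by linarith)
    _ ≤ a * g u ^ s + b * g v ^ s :=
        (convexOn_rpow hs).2 (hg0 u hu) (hg0 v hv) ha hb hab

namespace PosHomogeneous

variable {E : Type*} [AddCommGroup E] [Module ℝ E] {q : ℝ} {f : E → ℝ}

theorem map_zero (hf : PosHomogeneous q f) (hq : 0 < q) : f 0 = 0 := by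
  have h := hf 2 two_pos 0
  rw [smul_zero] at h
  have : (1 : ℝ) < 2 ^ q := one_lt_rpow one_lt_two hq
  nlinarith

theorem smul_of_nonneg (hf : PosHomogeneous q f) (hq : 0 < q) {t : ℝ} (ht : 0 ≤ t) (x : E) :
    f (t • x) = t ^ q * f x := by
  rcases ht.eq_or_lt with rfl | ht
  · simp [hf.map_zero hq, zero_rpow hq.ne']
  · exact hf t ht x

theorem rpow (hf : PosHomogeneous q f) (hf0 : ∀ x, 0 ≤ f x) (s : ℝ) :
    PosHomogeneous (q * s) (fun x => f x ^ s) := by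
  intro t ht x
  simp only [hf t ht x, mul_rpow (rpow_nonneg ht.le q) (hf0 x), ← rpow_mul ht.le]

theorem mem_smul_setOf_le_one_iff (hf : PosHomogeneous 1 f) {c : ℝ} (hc : 0 < c) {x : E} :
    x ∈ c • {y | f y ≤ 1} ↔ f x ≤ c := by
  rw [mem_smul_set_iff_inv_smul_mem₀ hc.ne', Set.mem_ofPred_eq, hf _ (inv_pos.2 hc), rpow_one,
    inv_mul_le_one₀ hc]

theorem add_le (hf : PosHomogeneous 1 f) (hf0 : ∀ x, 0 ≤ f x)
    (hconv : Convex ℝ {x | f x ≤ 1}) (u v : E) : f (u + v) ≤ f u + f v := by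
  refine le_of_forall_pos_le_add fun ε hε => ?_
  have ha : 0 < f u + ε / 2 := by linarith [hf0 u]
  have hb : 0 < f v + ε / 2 := by linarith [hf0 v]
  have huv : u + v ∈ ((f u + ε / 2) + (f v + ε / 2)) • {y | f y ≤ 1} := by
    rw [hconv.add_smul ha.le hb.le]
    exact Set.add_mem_add ((hf.mem_smul_setOf_le_one_iff ha).2 (by linarith))
      ((hf.mem_smul_setOf_le_one_iff hb).2 (by linarith))
  rw [hf.mem_smul_setOf_le_one_iff (by positivity)] at huv
  linarith

theorem convexOn (hf : PosHomogeneous 1 f) (hf0 : ∀ x, 0 ≤ f x)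
    (hconv : Convex ℝ {x | f x ≤ 1}) : ConvexOn ℝ univ f := by
  refine ⟨convex_univ, fun u _ v _ a b ha hb _ => ?_⟩
  calc f (a • u + b • v) ≤ f (a • u) + f (b • v) := hf.add_le hf0 hconv _ _
    _ = a • f u + b • f v := by
      rw [hf.smul_of_nonneg one_pos ha, hf.smul_of_nonneg one_pos hb, rpow_one, rpow_one]
      rfl

theorem convexOn_rpow_one_div (hf : PosHomogeneous q f) (hq : 0 < q) (hf0 : ∀ x, 0 ≤ f x)
    (hconv : ConvexOn ℝ univ f) : ConvexOn ℝ univ (fun x => f x ^ (1 / q)) := by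
  have hroot : PosHomogeneous 1 (fun x => f x ^ (1 / q)) := by
    simpa [hq.ne'] using hf.rpow hf0 (1 / q)
  refine hroot.convexOn (fun x => rpow_nonneg (hf0 x) _) ?_
  have hsub : {x | f x ^ (1 / q) ≤ 1} = {x | x ∈ univ ∧ f x ≤ 1} := by
    ext x
    simpa only [one_rpow, Set.mem_ofPred_eq, Set.mem_univ, true_and] using
      rpow_le_rpow_iff (hf0 x) zero_le_one (one_div_pos.2 hq)
  rw [hsub]
  exact hconv.convex_le 1

theorem convexOn_rpow (hf : PosHomogeneous q f) (hq : 0 < q) (hf0 : ∀ x, 0 ≤ f x)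
    (hconv : ConvexOn ℝ univ f) {s : ℝ} (hs : 1 / q ≤ s) :
    ConvexOn ℝ univ (fun x => f x ^ s) := by
  have hqs : 1 ≤ q * s := by rwa [div_le_iff₀' hq] at hs
  have := (hf.convexOn_rpow_one_div hq hf0 hconv).rpow
    (fun x _ => rpow_nonneg (hf0 x) _) hqs
  convert this using 2 with x
  rw [← rpow_mul (hf0 x), ← mul_assoc, one_div_mul_cancel hq.ne', one_mul]

theorem convexOn_iff_convexOn_rpow (hf : PosHomogeneous q f) (hq : 1 ≤ q)
    (hf0 : ∀ x, 0 ≤ f x) {r : ℝ} (hr : 1 / q ≤ r) :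
    ConvexOn ℝ univ f ↔ ConvexOn ℝ univ (fun x => f x ^ r) := by
  have hq0 : 0 < q := by linarith
  have hr0 : 0 < r := lt_of_lt_of_le (by positivity) hr
  refine ⟨fun hconv => hf.convexOn_rpow hq0 hf0 hconv hr, fun hconv => ?_⟩
  have := (hf.rpow hf0 r).convexOn_rpow (by positivity) (fun x => rpow_nonneg (hf0 x) _) hconv
    (s := 1 / r) (one_div_le_one_div_of_le hr0 (le_mul_of_one_le_left hr0.le hq))
  convert this using 2 with x
  rw [← rpow_mul (hf0 x), mul_one_div_cancel hr0.ne', rpow_one]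

end PosHomogeneous

section Orthogonal

variable {E : Type*} [NormedAddCommGroup E] [InnerProductSpace ℝ E] {K : Submodule ℝ E}
  {f : E → ℝ}

theorem mem_orthogonal_iff_of_coe_eq (hK : (K : Set E) = {z | f z = 0}) {y : E} :
    y ∈ Kᗮ ↔ ∀ z, f z = 0 → ⟪y, z⟫ = 0 := by
  rw [Submodule.mem_orthogonal']
  simp only [← SetLike.mem_coe, hK, Set.mem_ofPred_eq]

theorem pos_of_mem_orthogonal (hK : (K : Set E) = {z | f z = 0}) (hf0 : ∀ x, 0 ≤ f x)
    {y : E} (hy : y ∈ Kᗮ) (hy0 : y ≠ 0) : 0 < f y :=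
  (hf0 y).lt_of_ne' fun hfy =>
    hy0 (inner_self_eq_zero.1 ((mem_orthogonal_iff_of_coe_eq hK).1 hy y hfy))

end Orthogonal

namespace PosHomogeneous

variable {E : Type*} [NormedAddCommGroup E] [NormedSpace ℝ E] [FiniteDimensional ℝ E]
  {q : ℝ} {f : E → ℝ} {V : Submodule ℝ E}

theorem exists_pos_mul_rpow_norm_le (hf : PosHomogeneous q f) (hq : 0 < q) (hfc : Continuous f)
    (hpos : ∀ y ∈ V, y ≠ 0 → 0 < f y) : ∃ m > 0, ∀ y ∈ V, m * ‖y‖ ^ q ≤ f y := by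
  have hS : IsCompact (Metric.sphere (0 : E) 1 ∩ V) :=
    (isCompact_sphere 0 1).inter_right V.closed_of_finiteDimensional
  obtain ⟨m, hm, hmin⟩ := hS.exists_forall_le' hfc.continuousOn fun y hy =>
    hpos y hy.2 (ne_zero_of_mem_unit_sphere ⟨y, hy.1⟩)
  refine ⟨m, hm, fun y hy => ?_⟩
  rcases eq_or_ne y 0 with rfl | hy0
  · simp [hf.map_zero hq, zero_rpow hq.ne']
  have hy0 : 0 < ‖y‖ := norm_pos_iff.2 hy0
  have := hmin (‖y‖⁻¹ • y) ⟨by simp [norm_smul, hy0.ne'], V.smul_mem _ hy⟩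
  rw [hf _ (inv_pos.2 hy0), inv_rpow hy0.le, le_inv_mul_iff₀ (by positivity)] at this
  linarith

theorem isCompact_inter_setOf_le_one (hf : PosHomogeneous q f) (hq : 0 < q)
    (hfc : Continuous f) (hpos : ∀ y ∈ V, y ≠ 0 → 0 < f y) :
    IsCompact ((V : Set E) ∩ {y | f y ≤ 1}) := by
  obtain ⟨m, hm, hle⟩ := hf.exists_pos_mul_rpow_norm_le hq hfc hpos
  refine Metric.isCompact_of_isClosed_isBounded
    (V.closed_of_finiteDimensional.inter (isClosed_le hfc continuous_const))
    ((Metric.isBounded_closedBall (x := 0) (r := m⁻¹ ^ (1 / q))).subset ?_)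
  rintro y ⟨hy, hy1⟩
  rw [mem_closedBall_zero_iff, ← rpow_le_rpow_iff (norm_nonneg y) (by positivity) hq,
    ← rpow_mul (by positivity), one_div_mul_cancel hq.ne', rpow_one, inv_eq_one_div,
    le_div_iff₀' hm]
  exact (hle y hy).trans hy1

end PosHomogeneous

theorem sSup_polar_image_eq_zero {E : Type*} [NormedAddCommGroup E] [InnerProductSpace ℝ E]
    {V : Submodule ℝ E} {p : ℝ} {f : E → ℝ} (hp : 0 < p) (hf : PosHomogeneous p f) {x : E}
    (hx : ∀ y ∈ V, ⟪x, y⟫ ≤ 0) :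
    sSup ((fun y => (⟪x, y⟫ - 1) / f y) '' {y | y ∈ V ∧ 0 < f y}) = 0 := by
  have hub : ∀ r ∈ (fun y => (⟪x, y⟫ - 1) / f y) '' {y | y ∈ V ∧ 0 < f y}, r ≤ 0 := by
    rintro _ ⟨y, ⟨hy, hfy⟩, rfl⟩
    exact div_nonpos_of_nonpos_of_nonneg (by linarith [hx y hy]) hfy.le
  refine le_antisymm (Real.sSup_nonpos hub) ?_
  by_cases hne : ∃ u ∈ V, 0 < f u
  swap
  · push Not at hne
    rw [Set.eq_empty_of_forall_notMem (s := {y | y ∈ V ∧ 0 < f y})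
      (fun y hy => (hne y hy.1).not_gt hy.2), Set.image_empty, Real.sSup_empty]
  obtain ⟨u, huV, hfu⟩ := hne
  -- `V` is a subspace, so `⟪x, ·⟫ ≤ 0` on `V` forces `⟪x, ·⟫ = 0` there
  have hxu : ⟪x, u⟫ = 0 :=
    le_antisymm (hx u huV) (by simpa using hx (-u) (V.neg_mem huV))
  have hmem : ∀ t : ℝ, 0 < t →
      -(t ^ p * f u)⁻¹ ∈ (fun y => (⟪x, y⟫ - 1) / f y) '' {y | y ∈ V ∧ 0 < f y} :=
    fun t ht => ⟨t • u, ⟨V.smul_mem t huV, by rw [hf t ht]; positivity⟩, by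
      simp only [real_inner_smul_right, hxu, hf t ht]; ring⟩
  have htend : Tendsto (fun t : ℝ => -(t ^ p * f u)⁻¹) atTop (𝓝 0) := by
    simpa using ((tendsto_rpow_atTop hp).atTop_mul_const hfu).inv_tendsto_atTop.neg
  refine le_of_tendsto htend ?_
  filter_upwards [eventually_gt_atTop 0] with t ht
  exact le_csSup ⟨0, hub⟩ (hmem t ht)

section Transforms

variable {n : ℕ} {p : ℝ} {f : Euc n → ℝ} {K : Submodule ℝ (Euc n)}

theorem leg_eq_sSup_image (hK : (K : Set (Euc n)) = {z | f z = 0}) (x : Euc n) :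
    Leg f x = sSup ((fun y => ⟪x, y⟫ - f y) '' Kᗮ) := by
  unfold Leg
  congr 1
  ext r
  simp only [Set.mem_ofPred_eq, Set.mem_image, SetLike.mem_coe, mem_orthogonal_iff_of_coe_eq hK,
    eq_comm (a := r)]

theorem pol_eq_sSup_image (hK : (K : Set (Euc n)) = {z | f z = 0}) (x : Euc n) :
    Pol f x = sSup ((fun y => (⟪x, y⟫ - 1) / f y) '' {y | y ∈ Kᗮ ∧ 0 < f y}) := by
  unfold Pol
  congr 1
  ext r
  simp only [Set.mem_ofPred_eq, Set.mem_image, mem_orthogonal_iff_of_coe_eq hK, and_assoc,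
    eq_comm (a := r)]

theorem isGreatest_normDual_rpow_one_div (hp : 0 < p) (hf : PosHomogeneous p f)
    (hf0 : ∀ y, 0 ≤ f y) (hfc : Continuous f) (hK : (K : Set (Euc n)) = {z | f z = 0})
    (x : Euc n) :
    IsGreatest ((fun y => ⟪x, y⟫) '' ((Kᗮ : Set (Euc n)) ∩ {y | f y ≤ 1}))
      (NormDual (fun y => f y ^ (1 / p)) x) := by
  have hroot_le : ∀ y, f y ^ (1 / p) ≤ 1 ↔ f y ≤ 1 := fun y => by
    simpa only [one_rpow] using rpow_le_rpow_iff (hf0 y) zero_le_one (one_div_pos.2 hp)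
  have hroot_eq : ∀ y, f y ^ (1 / p) = 0 ↔ f y = 0 := fun y =>
    rpow_eq_zero (hf0 y) (one_div_pos.2 hp).ne'
  have hset : {r | ∃ y, f y ^ (1 / p) ≤ 1 ∧ (∀ z, f z ^ (1 / p) = 0 → ⟪y, z⟫ = 0) ∧ r = ⟪y, x⟫}
      = (fun y => ⟪x, y⟫) '' ((Kᗮ : Set (Euc n)) ∩ {y | f y ≤ 1}) := by
    ext r
    simp only [hroot_le, hroot_eq, ← mem_orthogonal_iff_of_coe_eq hK, Set.mem_ofPred_eq,
      Set.mem_image, Set.mem_inter_iff, SetLike.mem_coe, real_inner_comm x, eq_comm (a := r)]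
    tauto
  unfold NormDual
  rw [hset]
  have hcompact := hf.isCompact_inter_setOf_le_one hp hfc fun y hy hy0 =>
    pos_of_mem_orthogonal hK hf0 hy hy0
  exact (hcompact.image (continuous_const.inner continuous_id)).isGreatest_sSup
    ⟨0, 0, ⟨Kᗮ.zero_mem, by simp [hf.map_zero hp]⟩, inner_zero_right x⟩

theorem inner_le_rpow_one_div_mul_of_isGreatest (hp : 0 < p) (hf : PosHomogeneous p f)
    (hf0 : ∀ y, 0 ≤ f y) (hK : (K : Set (Euc n)) = {z | f z = 0}) {x : Euc n} {D : ℝ}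
    (hD : IsGreatest ((fun y => ⟪x, y⟫) '' ((Kᗮ : Set (Euc n)) ∩ {y | f y ≤ 1})) D)
    {y : Euc n} (hy : y ∈ Kᗮ) : ⟪x, y⟫ ≤ f y ^ (1 / p) * D := by
  rcases eq_or_ne y 0 with rfl | hy0
  · simp [hf.map_zero hp, zero_rpow (inv_pos.2 hp).ne']
  have hγ : 0 < f y ^ (1 / p) := rpow_pos_of_pos (pos_of_mem_orthogonal hK hf0 hy hy0) _
  have hunit : f ((f y ^ (1 / p))⁻¹ • y) = 1 := by
    rw [hf _ (inv_pos.2 hγ), inv_rpow hγ.le, one_div, rpow_inv_rpow (hf0 y) hp.ne',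
      inv_mul_cancel₀ (pos_of_mem_orthogonal hK hf0 hy hy0).ne']
  have : ⟪x, (f y ^ (1 / p))⁻¹ • y⟫ ≤ D := hD.2 ⟨_, ⟨Kᗮ.smul_mem _ hy, hunit.le⟩, rfl⟩
  rwa [real_inner_smul_right, inv_mul_le_iff₀ hγ] at this

theorem leg_eq_of_isGreatest (hp : 1 < p) (hf : PosHomogeneous p f) (hf0 : ∀ y, 0 ≤ f y)
    (hK : (K : Set (Euc n)) = {z | f z = 0}) {x : Euc n} {D : ℝ}
    (hD : IsGreatest ((fun y => ⟪x, y⟫) '' ((Kᗮ : Set (Euc n)) ∩ {y | f y ≤ 1})) D) :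
    Leg f x = (p - 1) / p ^ (p / (p - 1)) * D ^ (p / (p - 1)) := by
  have hp0 : 0 < p := by linarith
  have hD0 : 0 ≤ D := hD.2 ⟨0, ⟨Kᗮ.zero_mem, by simp [hf.map_zero hp0]⟩, inner_zero_right x⟩
  obtain ⟨y₀, ⟨hy₀K, hy₀ : f y₀ ≤ 1⟩, hxy₀ : ⟪x, y₀⟫ = D⟩ := hD.1
  rw [leg_eq_sSup_image hK]
  have hub : ∀ r ∈ (fun y => ⟪x, y⟫ - f y) '' Kᗮ,
      r ≤ (p - 1) / p ^ (p / (p - 1)) * D ^ (p / (p - 1)) := by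
    rintro _ ⟨y, hy, rfl⟩
    calc ⟪x, y⟫ - f y ≤ f y ^ (1 / p) * D - (f y ^ (1 / p)) ^ p := by
          rw [one_div, rpow_inv_rpow (hf0 y) hp0.ne', ← one_div]
          linarith [inner_le_rpow_one_div_mul_of_isGreatest hp0 hf hf0 hK hD hy]
      _ ≤ _ := legendre_rpow_le hp hD0 (rpow_nonneg (hf0 y) _)
  set s₀ := (D / p) ^ (1 / (p - 1))
  have hmem : ⟪x, s₀ • y₀⟫ - f (s₀ • y₀) ∈ (fun y => ⟪x, y⟫ - f y) '' Kᗮ :=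
    Set.mem_image_of_mem _ (Kᗮ.smul_mem s₀ hy₀K)
  have hge : (p - 1) / p ^ (p / (p - 1)) * D ^ (p / (p - 1)) ≤ ⟪x, s₀ • y₀⟫ - f (s₀ • y₀) := by
    rw [real_inner_smul_right, hxy₀, hf.smul_of_nonneg hp0 (by positivity),
      ← legendre_rpow_eq hp hD0]
    have : 0 ≤ s₀ ^ p := by positivity
    nlinarith
  exact le_antisymm (csSup_le ⟨_, hmem⟩ hub) (le_csSup_of_le ⟨_, hub⟩ hmem hge)

theorem pol_eq_of_isGreatest (hp : 1 < p) (hf : PosHomogeneous p f) (hf0 : ∀ y, 0 ≤ f y)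
    (hK : (K : Set (Euc n)) = {z | f z = 0}) {x : Euc n} {D : ℝ}
    (hD : IsGreatest ((fun y => ⟪x, y⟫) '' ((Kᗮ : Set (Euc n)) ∩ {y | f y ≤ 1})) D) :
    Pol f x = (p - 1) ^ (p - 1) / p ^ p * D ^ p := by
  have hp0 : 0 < p := by linarith
  have hD0 : 0 ≤ D := hD.2 ⟨0, ⟨Kᗮ.zero_mem, by simp [hf.map_zero hp0]⟩, inner_zero_right x⟩
  have hle := fun y (hy : y ∈ Kᗮ) => inner_le_rpow_one_div_mul_of_isGreatest hp0 hf hf0 hK hD hy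
  rw [pol_eq_sSup_image hK]
  rcases hD0.eq_or_lt with rfl | hDpos
  · rw [zero_rpow hp0.ne', mul_zero]
    exact sSup_polar_image_eq_zero hp0 hf fun y hy => by simpa using hle y hy
  have hub : ∀ r ∈ (fun y => (⟪x, y⟫ - 1) / f y) '' {y | y ∈ Kᗮ ∧ 0 < f y},
      r ≤ (p - 1) ^ (p - 1) / p ^ p * D ^ p := by
    rintro _ ⟨y, ⟨hy, hfy⟩, rfl⟩
    have hγ : 0 < f y ^ (1 / p) := rpow_pos_of_pos hfy _
    calc (⟪x, y⟫ - 1) / f y ≤ (f y ^ (1 / p) * D - 1) / (f y ^ (1 / p)) ^ p := by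
          rw [one_div, rpow_inv_rpow (hf0 y) hp0.ne', ← one_div]
          gcongr
          exact hle y hy
      _ ≤ _ := polar_rpow_div_le hp hγ hD0
  obtain ⟨y₀, ⟨hy₀K, hy₀ : f y₀ ≤ 1⟩, hxy₀ : ⟪x, y₀⟫ = D⟩ := hD.1
  have hfy₀ : 0 < f y₀ := pos_of_mem_orthogonal hK hf0 hy₀K (by
    rintro rfl
    simp only [inner_zero_right] at hxy₀
    linarith)
  set s := p / (p - 1) / D
  have hs : 0 < s := div_pos (div_pos hp0 (by linarith)) hDpos
  have hmem : (⟪x, s • y₀⟫ - 1) / f (s • y₀)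
      ∈ (fun y => (⟪x, y⟫ - 1) / f y) '' {y | y ∈ Kᗮ ∧ 0 < f y} :=
    Set.mem_image_of_mem _ ⟨Kᗮ.smul_mem s hy₀K, by rw [hf s hs]; positivity⟩
  have hge : (p - 1) ^ (p - 1) / p ^ p * D ^ p ≤ (⟪x, s • y₀⟫ - 1) / f (s • y₀) := by
    rw [real_inner_smul_right, hxy₀, hf s hs, ← polar_rpow_div_eq hp hDpos]
    refine div_le_div_of_nonneg_left ?_ (by positivity) (mul_le_of_le_one_right (by positivity) hy₀)
    rw [div_mul_cancel₀ _ hDpos.ne', sub_nonneg, one_le_div (by linarith)]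
    linarith
  exact le_antisymm (csSup_le ⟨_, hmem⟩ hub) (le_csSup_of_le ⟨_, hub⟩ hmem hge)

end Transforms

/-- convexity of powers of homogeneous functions, and formulas expressing
`ℒf` and `𝒜f` through the norm-like dual of `f^(1/p)`. -/
theorem stmt_14 {n : ℕ} (p r : ℝ) (hp : 1 ≤ p) (hr : 1 / p ≤ r) (f : Euc n → ℝ)
    (hf0 : ∀ x, 0 ≤ f x)
    (hfh : ∀ t : ℝ, 0 < t → ∀ x, f (t • x) = t ^ p * f x) :
    (ConvexOn ℝ Set.univ f ↔ ConvexOn ℝ Set.univ (fun x => f x ^ r)) ∧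
    (1 < p → CHplus n p f → ∀ pstar : ℝ, pstar = p / (p - 1) →
      (Leg f = fun x => ((p - 1) / p ^ pstar) * (NormDual (fun y => f y ^ (1 / p)) x) ^ pstar) ∧
      (Pol f = fun x => ((p - 1) ^ (p - 1) / p ^ p) * (NormDual (fun y => f y ^ (1 / p)) x) ^ p)) := by
  refine ⟨PosHomogeneous.convexOn_iff_convexOn_rpow hfh hp hf0 hr, ?_⟩
  rintro hp1 ⟨hconv, -, -, K, hK⟩ pstar rfl
  have hfc : Continuous f := continuousOn_univ.1 (hconv.continuousOn isOpen_univ)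
  have hD := isGreatest_normDual_rpow_one_div (by linarith) hfh hf0 hfc hK
  exact ⟨funext fun x => leg_eq_of_isGreatest hp1 hfh hf0 hK (hD x),
    funext fun x => pol_eq_of_isGreatest hp1 hfh hf0 hK (hD x)⟩

end
end

section
/- Let p, q ≥ 1, f ∈ CH⁺_p(ℝⁿ), and g ∈ CH⁺_q(ℝⁿ). For every λ ≥ 0 and every t > 0, x ∈ S_λ(f, g) if and only if t·x ∈ S_{t^{p−q}·λ}(f, g). Moreover, if p ≠ q, f and g are even, and (f, g) has a nonzero eigenvalue, then the function λ ↦ mult_{f,g}(λ) is constant on (0, +∞). -/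
/-!
If `f` and `g` are positively homogeneous of degrees `p` and `q`, then rescaling a point by
`t > 0` rescales subgradients of `f` by `t ^ (p - 1)` and those of `g` by `t ^ (q - 1)`, so
`x ↦ t • x` maps `S_λ(f, g)` bijectively onto `S_{t ^ (p - q) λ}(f, g)`. The genus is invariant
under this odd homeomorphism, and when `p ≠ q` every ratio `λ₂ / λ₁ > 0` is of the form
`t ^ (p - q)`, so all positive eigenvalues have the same multiplicity.
-/

open Set
open scoped RealInnerProductSpace

noncomputable section

open scoped Pointwise

variable {n : ℕ}

def IsPosHomogeneous (p : ℝ) (f : Euc n → ℝ) : Prop :=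
  ∀ t : ℝ, 0 < t → ∀ x, f (t • x) = t ^ p * f x

lemma CHplus.isPosHomogeneous {p : ℝ} {f : Euc n → ℝ} (hf : CHplus n p f) :
    IsPosHomogeneous p f :=
  hf.2.2.1

lemma smul_mem_subdiff {p : ℝ} {f : Euc n → ℝ} (hf : IsPosHomogeneous p f) {t : ℝ}
    (ht : 0 < t) {x w : Euc n} (hw : w ∈ subdiff f x) :
    t ^ (p - 1) • w ∈ subdiff f (t • x) := by
  intro y
  obtain ⟨z, rfl⟩ : ∃ z, y = t • z := ⟨t⁻¹ • y, by rw [smul_smul, mul_inv_cancel₀ ht.ne', one_smul]⟩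
  have hpow : t ^ (p - 1) * t = t ^ p := by
    rw [← Real.rpow_add_one ht.ne', sub_add_cancel]
  calc ⟪t ^ (p - 1) • w, t • z - t • x⟫
      = t ^ p * ⟪w, z - x⟫ := by
        rw [← smul_sub, real_inner_smul_left, real_inner_smul_right, ← mul_assoc, hpow]
    _ ≤ t ^ p * (f z - f x) := mul_le_mul_of_nonneg_left (hw z) (by positivity)
    _ = f (t • z) - f (t • x) := by rw [hf t ht, hf t ht]; ring

lemma smul_mem_eigSpace {p q : ℝ} {f g : Euc n → ℝ} (hf : IsPosHomogeneous p f)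
    (hg : IsPosHomogeneous q g) {lam t : ℝ} (ht : 0 < t) {x : Euc n}
    (hx : x ∈ eigSpace f g lam) : t • x ∈ eigSpace f g (t ^ (p - q) * lam) := by
  obtain ⟨w, hw, hfw⟩ := hx
  refine ⟨t ^ (q - 1) • w, smul_mem_subdiff hg ht hw, ?_⟩
  have hpow : t ^ (p - q) * t ^ (q - 1) = t ^ (p - 1) := by
    rw [← Real.rpow_add ht]; ring_nf
  have hcoeff : (t ^ (p - q) * lam) • t ^ (q - 1) • w = t ^ (p - 1) • lam • w := by
    rw [smul_smul, smul_smul, ← hpow]; ring_nf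
  rw [hcoeff]
  exact smul_mem_subdiff hf ht hfw

lemma eigSpace_rpow_mul {p q : ℝ} {f g : Euc n → ℝ} (hf : IsPosHomogeneous p f)
    (hg : IsPosHomogeneous q g) (lam : ℝ) {t : ℝ} (ht : 0 < t) :
    eigSpace f g (t ^ (p - q) * lam) = t • eigSpace f g lam := by
  refine Subset.antisymm (fun y hy => ⟨t⁻¹ • y, ?_, ?_⟩) ?_
  · have h := smul_mem_eigSpace hf hg (inv_pos.mpr ht) hy
    rwa [Real.inv_rpow ht.le, ← mul_assoc,
      inv_mul_cancel₀ (Real.rpow_pos_of_pos ht _).ne', one_mul] at h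
  · simp only [smul_smul, mul_inv_cancel₀ ht.ne', one_smul]
  · rintro _ ⟨x, hx, rfl⟩
    exact smul_mem_eigSpace hf hg ht hx

lemma genus_le_of_odd_mapsTo {S T : Set (Euc n)} {ψ : Euc n → Euc n} (hψ : ContinuousOn ψ T)
    (hψ_odd : ∀ x ∈ T, ψ (-x) = -ψ x) (h : MapsTo ψ T S) : genus T ≤ genus S := by
  apply sInf_le_sInf
  rintro k ⟨m, rfl, φ, hφ, hφ_ne, hφ_odd⟩
  refine ⟨m, rfl, φ ∘ ψ, hφ.comp hψ h, fun x hx => hφ_ne _ (h hx), fun x hx => ?_⟩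
  simp only [Function.comp_apply, hψ_odd x hx, hφ_odd _ (h hx)]

lemma genus_smul_set {c : ℝ} (hc : c ≠ 0) (S : Set (Euc n)) : genus (c • S) = genus S := by
  have hsmul (a : ℝ) (T U : Set (Euc n)) (h : MapsTo (a • ·) T U) : genus T ≤ genus U :=
    genus_le_of_odd_mapsTo (continuous_const_smul a).continuousOn (fun x _ => smul_neg a x) h
  refine le_antisymm (hsmul c⁻¹ _ _ ?_) (hsmul c _ _ (mapsTo_image _ S))
  rintro _ ⟨x, hx, rfl⟩
  simpa [smul_smul, inv_mul_cancel₀ hc] using hx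

lemma mult_rpow_mul {p q : ℝ} {f g : Euc n → ℝ} (hf : IsPosHomogeneous p f)
    (hg : IsPosHomogeneous q g) (lam : ℝ) {t : ℝ} (ht : 0 < t) :
    mult f g (t ^ (p - q) * lam) = mult f g lam := by
  rw [mult, eigSpace_rpow_mul hf hg lam ht, genus_smul_set ht.ne', mult]

theorem stmt_16_general {n : ℕ} (p q : ℝ)
    (f g : Euc n → ℝ) (hf : CHplus n p f) (hg : CHplus n q g) :
    (∀ lam : ℝ, 0 ≤ lam → ∀ t : ℝ, 0 < t → ∀ x : Euc n,
      (x ∈ eigSpace f g lam ↔ t • x ∈ eigSpace f g (t ^ (p - q) * lam))) ∧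
    (p ≠ q → (∀ x, f (-x) = f x) → (∀ x, g (-x) = g x) →
      (∃ lam : ℝ, lam ≠ 0 ∧ IsEigenvalue f g lam) →
      ∀ lam₁ lam₂ : ℝ, 0 < lam₁ → 0 < lam₂ →
        mult f g lam₁ = mult f g lam₂) := by
  have hf := hf.isPosHomogeneous
  have hg := hg.isPosHomogeneous
  refine ⟨fun lam _ t ht x => ?_, fun hpq _ _ _ lam₁ lam₂ h₁ h₂ => ?_⟩
  · rw [eigSpace_rpow_mul hf hg lam ht, smul_mem_smul_set_iff₀ ht.ne']
  · set t := (lam₂ / lam₁) ^ (p - q)⁻¹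
    have hscale : t ^ (p - q) * lam₁ = lam₂ := by
      rw [← Real.rpow_mul (div_pos h₂ h₁).le, inv_mul_cancel₀ (sub_ne_zero.mpr hpq),
        Real.rpow_one, div_mul_cancel₀ _ h₁.ne']
    rw [← hscale, mult_rpow_mul hf hg lam₁ (by positivity)]

/-- scaling behaviour of eigenspaces and constancy of multiplicities
when `p ≠ q`. -/
theorem stmt_16 {n : ℕ} (p q : ℝ) (hp : 1 ≤ p) (hq : 1 ≤ q)
    (f g : Euc n → ℝ) (hf : CHplus n p f) (hg : CHplus n q g) :
    (∀ lam : ℝ, 0 ≤ lam → ∀ t : ℝ, 0 < t → ∀ x : Euc n,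
      (x ∈ eigSpace f g lam ↔ t • x ∈ eigSpace f g (t ^ (p - q) * lam))) ∧
    (p ≠ q → (∀ x, f (-x) = f x) → (∀ x, g (-x) = g x) →
      (∃ lam : ℝ, lam ≠ 0 ∧ IsEigenvalue f g lam) →
      ∀ lam₁ lam₂ : ℝ, 0 < lam₁ → 0 < lam₂ →
        mult f g lam₁ = mult f g lam₂) :=
  stmt_16_general p q f g hf hg

end
end
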